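/- arXiv:1807.03926 — 3 statements merged into one kernel-verified Lean document; each statement's English description precedes it below -/
import Mathlib

section
/- Let n ≥ 2 and 0 ≤ r ≤ n, and place r distinguishable rooks independently and uniformly at random on the board B_n. Then the probability that no two rooks attack in the set-partition sense, namely P(W_RR + W_CC = 0) (no two rooks share a row and no two share a column), equals r! · S(n, n−r) / binomial(n,2)^r. Equivalently, the number of r-element subsets of B_n in which all first coordinates are pairwise distinct and all second coordinates are pairwise distinct equals the Stirling number of the second kind S(n, n−r). -/
open Finset Filter

/-- The triangular board `B_n = {(i,j) : 1 ≤ i < j ≤ n}`. -/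
def board (n : ℕ) : Finset (ℕ × ℕ) :=
  (Finset.range (n + 1) ×ˢ Finset.range (n + 1)).filter fun p => 1 ≤ p.1 ∧ p.1 < p.2

/-- Probability of event `E` when `r` distinguishable rooks are placed independently and
uniformly at random on `B_n`; a placement is a function `Fin r → ℕ × ℕ`, rook `a` sitting
on the square `f a = (row, column)`. -/
noncomputable def rookProb (n r : ℕ) (E : (Fin r → ℕ × ℕ) → Prop) : ℝ :=
  ({f : Fin r → ℕ × ℕ | (∀ a, f a ∈ board n) ∧ E f}.ncard : ℝ) / ((board n).card : ℝ) ^ r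

/-- Number of (unordered) pairs of rooks lying in the same row. -/
def WRR (r : ℕ) (f : Fin r → ℕ × ℕ) : ℕ :=
  (Finset.univ.filter fun p : Fin r × Fin r => p.1 < p.2 ∧ (f p.1).1 = (f p.2).1).card

/-- Number of (unordered) pairs of rooks lying in the same column. -/
def WCC (r : ℕ) (f : Fin r → ℕ × ℕ) : ℕ :=
  (Finset.univ.filter fun p : Fin r × Fin r => p.1 < p.2 ∧ (f p.1).2 = (f p.2).2).card

/-- `S(n,k)`, the Stirling number of the second kind: the number of partitions of a set of
size `n` into exactly `k` (nonempty) blocks. -/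
noncomputable def stirling2 (n k : ℕ) : ℕ :=
  Nat.card {P : Finpartition (Finset.univ : Finset (Fin n)) // P.parts.card = k}

/-!
A set partition of a finite linear order is encoded by its successor pairs `(x, y)`, `y` being
the next element after `x` in its block. These are rooks on the board `{(x, y) | x < y}` with
no two in a row (each element has at most one successor) and no two in a column (at most one
predecessor), and every such non-attacking placement comes from exactly one partition: the one
whose blocks are the chains `x → y → ⋯` traced by the rooks. A partition with `k` blocks has
`n - k` successor pairs, so `r`-rook placements on `B_n` correspond to partitions of
`{1, …, n}` into `n - r` blocks. Ordered placements of `r` distinguishable rooks are these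
sets together with one of the `r!` labellings.
-/
open Relation

variable {α : Type*} [LinearOrder α]

structure IsNonAttacking (s : Finset (α × α)) : Prop where
  lt : ∀ p ∈ s, p.1 < p.2
  injOn_fst : Set.InjOn Prod.fst (s : Set (α × α))
  injOn_snd : Set.InjOn Prod.snd (s : Set (α × α))

abbrev Reach (s : Finset (α × α)) : α → α → Prop :=
  ReflTransGen fun a b => (a, b) ∈ s

namespace IsNonAttacking

variable {s : Finset (α × α)} {x y : α}

lemma le_of_reach (hs : IsNonAttacking s) (h : Reach s x y) : x ≤ y := by
  induction h with
  | refl => rfl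
  | tail _ hbc ih => exact ih.trans (hs.lt _ hbc).le

lemma exists_mem_le_of_lt (hs : IsNonAttacking s) (hxy : x < y) (h : Reach s x y ∨ Reach s y x) :
    ∃ z, (x, z) ∈ s ∧ z ≤ y := by
  rcases h with h | h
  · obtain rfl | ⟨z, hxz, hzy⟩ := ReflTransGen.cases_head h
    · exact absurd hxy (lt_irrefl x)
    · exact ⟨z, hxz, hs.le_of_reach hzy⟩
  · exact absurd (hs.le_of_reach h) hxy.not_ge

lemma rightUnique (hs : IsNonAttacking s) : Relator.RightUnique fun a b => (a, b) ∈ s :=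
  fun _ _ _ hab hac => congrArg Prod.snd (hs.injOn_fst hab hac rfl)

lemma rightUnique_swap (hs : IsNonAttacking s) :
    Relator.RightUnique (Function.swap fun a b => (a, b) ∈ s) :=
  fun _ _ _ hba hca => congrArg Prod.fst (hs.injOn_snd hba hca rfl)

/-- Lying on a common chain of rooks; transitive because no row and no column holds two rooks. -/
def setoid (hs : IsNonAttacking s) : Setoid α where
  r x y := Reach s x y ∨ Reach s y x
  iseqv.refl _ := .inl .refl
  iseqv.symm := Or.symm
  iseqv.trans := by
    rintro x y z (hxy | hyx) (hyz | hzy)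
    · exact .inl (hxy.trans hyz)
    · exact (ReflTransGen.total_of_right_unique hs.rightUnique_swap (reflTransGen_swap.2 hxy)
        (reflTransGen_swap.2 hzy)).symm.imp reflTransGen_swap.1 reflTransGen_swap.1
    · exact ReflTransGen.total_of_right_unique hs.rightUnique hyx hyz
    · exact .inr (hzy.trans hyx)

lemma map_iff {β : Type*} [LinearOrder β] (e : α ↪o β) {t : Finset (α × α)} :
    IsNonAttacking (t.map (e.toEmbedding.prodMap e.toEmbedding)) ↔ IsNonAttacking t := by
  have hF := (e.toEmbedding.prodMap e.toEmbedding).injective.injOn (s := (t : Set (α × α)))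
  have hcomp (g : α × α → α) : Set.InjOn (e ∘ g) (t : Set (α × α)) ↔ Set.InjOn g t :=
    ⟨Set.InjOn.of_comp, e.injective.comp_injOn⟩
  have hfst : Set.InjOn Prod.fst (t.map (e.toEmbedding.prodMap e.toEmbedding) : Set (β × β)) ↔
      Set.InjOn Prod.fst (t : Set (α × α)) := by
    rw [coe_map, ← hF.comp_iff]
    exact hcomp Prod.fst
  have hsnd : Set.InjOn Prod.snd (t.map (e.toEmbedding.prodMap e.toEmbedding) : Set (β × β)) ↔
      Set.InjOn Prod.snd (t : Set (α × α)) := by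
    rw [coe_map, ← hF.comp_iff]
    exact hcomp Prod.snd
  have hlt : (∀ p ∈ t.map (e.toEmbedding.prodMap e.toEmbedding), p.1 < p.2) ↔
      ∀ p ∈ t, p.1 < p.2 := by
    simp only [forall_mem_map]
    exact forall₂_congr fun q _ => e.lt_iff_lt
  exact ⟨fun ⟨h₁, h₂, h₃⟩ => ⟨hlt.1 h₁, hfst.1 h₂, hsnd.1 h₃⟩,
    fun ⟨h₁, h₂, h₃⟩ => ⟨hlt.2 h₁, hfst.2 h₂, hsnd.2 h₃⟩⟩

lemma image_univ_iff {ι : Type*} [Fintype ι] {f : ι → α × α}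
    (hf : Function.Injective f) :
    IsNonAttacking (univ.image f) ↔ (∀ i, (f i).1 < (f i).2) ∧
      Function.Injective (Prod.fst ∘ f) ∧ Function.Injective (Prod.snd ∘ f) := by
  have hrange (g : α × α → α) : Set.InjOn g (univ.image f : Set (α × α)) ↔
      Function.Injective (g ∘ f) := by
    rw [coe_image, coe_univ, ← Set.injOn_univ, hf.injOn.comp_iff]
  rw [← hrange, ← hrange]
  exact ⟨fun ⟨hlt, hfst, hsnd⟩ => ⟨fun i => hlt _ (mem_image_of_mem f (mem_univ i)), hfst,
    hsnd⟩, fun ⟨hlt, hfst, hsnd⟩ => ⟨by simpa using hlt, hfst, hsnd⟩⟩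

end IsNonAttacking

namespace Finpartition

variable [Fintype α] (P : Finpartition (univ : Finset α))

def succPairs : Finset (α × α) :=
  {q | q.2 ∈ P.part q.1 ∧ q.1 < q.2 ∧ ∀ z ∈ P.part q.1, q.1 < z → q.2 ≤ z}

variable {P} {x y : α}

lemma mem_succPairs : (x, y) ∈ P.succPairs ↔
    y ∈ P.part x ∧ x < y ∧ ∀ z ∈ P.part x, x < z → y ≤ z := by
  simp [succPairs]

lemma part_eq_of_mem_part (h : y ∈ P.part x) : P.part y = P.part x :=
  P.part_eq_of_mem (P.part_mem.2 (mem_univ x)) h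

lemma mem_part_comm : y ∈ P.part x ↔ x ∈ P.part y :=
  ⟨fun h => part_eq_of_mem_part h ▸ P.mem_part (mem_univ x),
    fun h => part_eq_of_mem_part h ▸ P.mem_part (mem_univ y)⟩

lemma exists_mem_succPairs_le (hy : y ∈ P.part x) (hxy : x < y) :
    ∃ z, (x, z) ∈ P.succPairs ∧ z ≤ y := by
  have hne : {z ∈ P.part x | x < z}.Nonempty := ⟨y, mem_filter.2 ⟨hy, hxy⟩⟩
  have hmin := mem_filter.1 ({z ∈ P.part x | x < z}.min'_mem hne)
  refine ⟨_, mem_succPairs.2 ⟨hmin.1, hmin.2, fun z hz hxz => ?_⟩, ?_⟩ <;>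
    exact min'_le _ _ (mem_filter.2 ⟨‹_›, ‹_›⟩)

variable (P) in
lemma isNonAttacking_succPairs : IsNonAttacking P.succPairs where
  lt := by
    rintro ⟨x, y⟩ h
    exact (mem_succPairs.1 h).2.1
  injOn_fst := by
    rintro ⟨x, y⟩ h ⟨x', y'⟩ h' (rfl : x = x')
    obtain ⟨hy, hxy, hmin⟩ := mem_succPairs.1 h
    obtain ⟨hy', hxy', hmin'⟩ := mem_succPairs.1 h'
    exact Prod.ext rfl ((hmin y' hy' hxy').antisymm (hmin' y hy hxy))
  injOn_snd := by
    rintro ⟨x, y⟩ h ⟨x', y'⟩ h' (rfl : y = y')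
    obtain ⟨hy, hxy, hmin⟩ := mem_succPairs.1 h
    obtain ⟨hy', hxy', hmin'⟩ := mem_succPairs.1 h'
    have hx' : x' ∈ P.part x := by
      rw [← part_eq_of_mem_part hy, part_eq_of_mem_part hy']
      exact P.mem_part (mem_univ x')
    have hx : x ∈ P.part x' := mem_part_comm.1 hx'
    refine Prod.ext (le_antisymm ?_ ?_) rfl <;> by_contra! hlt
    · exact (hmin' x hx hlt).not_gt hxy
    · exact (hmin x' hx' hlt).not_gt hxy'

lemma mem_part_of_reach (h : Reach P.succPairs x y) : y ∈ P.part x := by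
  induction h with
  | refl => exact P.mem_part (mem_univ x)
  | tail _ hbc ih => exact part_eq_of_mem_part ih ▸ (mem_succPairs.1 hbc).1

lemma reach_of_mem_part_of_le (hy : y ∈ P.part x) (hxy : x ≤ y) : Reach P.succPairs x y := by
  induction x using WellFoundedGT.induction with
  | _ x ih =>
    obtain rfl | hlt := hxy.eq_or_lt
    · exact .refl
    obtain ⟨z, hz, hzy⟩ := exists_mem_succPairs_le hy hlt
    obtain ⟨hzx, hxz, -⟩ := mem_succPairs.1 hz
    exact .head hz (ih z hxz (part_eq_of_mem_part hzx ▸ hy) hzy)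

lemma mem_part_iff_reach : y ∈ P.part x ↔ Reach P.succPairs x y ∨ Reach P.succPairs y x := by
  refine ⟨fun h => ?_, ?_⟩
  · rcases le_total x y with hxy | hyx
    · exact .inl (reach_of_mem_part_of_le h hxy)
    · exact .inr (reach_of_mem_part_of_le (mem_part_comm.1 h) hyx)
  · rintro (h | h)
    · exact mem_part_of_reach h
    · exact mem_part_comm.2 (mem_part_of_reach h)

variable (P) in
lemma card_succPairs_add_card_parts : #P.succPairs + #P.parts = Fintype.card α := by
  have hsucc : #P.succPairs = #{x | ∃ y ∈ P.part x, x < y} := by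
    rw [← card_image_of_injOn P.isNonAttacking_succPairs.injOn_fst]
    congr 1
    ext x
    simp only [mem_image, mem_filter, mem_univ, true_and]
    constructor
    · rintro ⟨⟨x, y⟩, h, rfl⟩
      exact ⟨y, (mem_succPairs.1 h).1, (mem_succPairs.1 h).2.1⟩
    · rintro ⟨y, hy, hxy⟩
      obtain ⟨z, hz, -⟩ := exists_mem_succPairs_le hy hxy
      exact ⟨(x, z), hz, rfl⟩
  -- A part is recorded by its largest element.
  have hparts : #P.parts = #{x | ¬∃ y ∈ P.part x, x < y} := by
    have hpart_max {b} (hb : b ∈ P.parts) : P.part (b.max' (P.nonempty_of_mem_parts hb)) = b :=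
      P.part_eq_of_mem hb (max'_mem _ _)
    refine card_bij' (fun b hb => b.max' (P.nonempty_of_mem_parts hb)) (fun x _ => P.part x)
      (fun b hb => ?_) (fun x _ => P.part_mem.2 (mem_univ x)) (fun b hb => hpart_max hb)
      (fun x hx => ?_)
    · simp only [mem_filter, mem_univ, true_and, hpart_max hb, not_exists, not_and, not_lt]
      exact fun y hy => le_max' b y hy
    · simp only [mem_filter, mem_univ, true_and, not_exists, not_and, not_lt] at hx
      exact le_antisymm (max'_le _ _ _ hx) (le_max' _ _ (P.mem_part (mem_univ x)))
  rw [hsucc, hparts, card_filter_add_card_filter_not, card_univ]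

end Finpartition

namespace IsNonAttacking

variable [Fintype α] {s : Finset (α × α)} {x y : α}

noncomputable def toFinpartition (hs : IsNonAttacking s) : Finpartition (univ : Finset α) := by
  classical exact .ofSetoid hs.setoid

lemma mem_part_toFinpartition (hs : IsNonAttacking s) :
    y ∈ hs.toFinpartition.part x ↔ Reach s x y ∨ Reach s y x := by
  classical exact Finpartition.mem_part_ofSetoid_iff_rel

lemma succPairs_toFinpartition (hs : IsNonAttacking s) : hs.toFinpartition.succPairs = s := by
  ext ⟨x, y⟩
  rw [Finpartition.mem_succPairs, mem_part_toFinpartition]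
  constructor
  · rintro ⟨hy, hxy, hmin⟩
    obtain ⟨z, hxz, hzy⟩ := hs.exists_mem_le_of_lt hxy hy
    have hz := hs.lt _ hxz
    have hzx : z ∈ hs.toFinpartition.part x := (mem_part_toFinpartition hs).2 (.inl (.single hxz))
    obtain rfl : z = y := hzy.antisymm (hmin z hzx hz)
    exact hxz
  · intro hxy
    refine ⟨.inl (.single hxy), hs.lt _ hxy, fun z hz hxz => ?_⟩
    obtain ⟨w, hxw, hwz⟩ := hs.exists_mem_le_of_lt hxz ((mem_part_toFinpartition hs).1 hz)
    exact hs.rightUnique hxy hxw ▸ hwz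

end IsNonAttacking

namespace Finpartition

variable [Fintype α]

lemma parts_eq_image_part (P : Finpartition (univ : Finset α)) : P.parts = univ.image P.part := by
  ext b
  simp only [mem_image, mem_univ, true_and]
  refine ⟨fun hb => ?_, ?_⟩
  · obtain ⟨x, -, hx⟩ := P.part_surjOn hb
    exact ⟨x, hx⟩
  · rintro ⟨x, rfl⟩
    exact P.part_mem.2 (mem_univ x)

lemma toFinpartition_succPairs (P : Finpartition (univ : Finset α)) :
    P.isNonAttacking_succPairs.toFinpartition = P := by
  have hpart (x : α) : P.isNonAttacking_succPairs.toFinpartition.part x = P.part x := by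
    ext y
    rw [IsNonAttacking.mem_part_toFinpartition, mem_part_iff_reach]
  ext1
  rw [parts_eq_image_part, parts_eq_image_part]
  exact image_congr fun x _ => hpart x

noncomputable def equivIsNonAttacking :
    Finpartition (univ : Finset α) ≃ {s : Finset (α × α) // IsNonAttacking s} where
  toFun P := ⟨P.succPairs, P.isNonAttacking_succPairs⟩
  invFun s := s.2.toFinpartition
  left_inv := toFinpartition_succPairs
  right_inv s := Subtype.ext s.2.succPairs_toFinpartition

end Finpartition

theorem ncard_isNonAttacking_card_eq [Fintype α] {r : ℕ} (hr : r ≤ Fintype.card α) :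
    {s : Finset (α × α) | IsNonAttacking s ∧ #s = r}.ncard
      = Nat.card {P : Finpartition (univ : Finset α) // #P.parts = Fintype.card α - r} := by
  rw [← Nat.card_coe_set_eq]
  refine Nat.card_congr ((Finpartition.equivIsNonAttacking.subtypeEquiv fun P => ?_).trans
    (Equiv.subtypeSubtypeEquivSubtypeInter _ _)).symm
  have := P.card_succPairs_add_card_parts
  change _ ↔ #P.succPairs = r
  omega

section InjectiveTuples

variable {β : Type*} [DecidableEq β] {r : ℕ}

noncomputable def injectiveImageEqEquiv (s : Finset β) :
    {f : Fin r → β // Function.Injective f ∧ univ.image f = s} ≃ (Fin r ≃ s) where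
  toFun f := Equiv.ofBijective (fun a => ⟨f.1 a, by
      rcases f with ⟨f, -, rfl⟩; exact mem_image_of_mem f (mem_univ a)⟩)
    ⟨fun a b h => f.2.1 (congrArg Subtype.val h), fun ⟨y, hy⟩ => by
      obtain ⟨a, -, rfl⟩ := mem_image.1 (f.2.2 ▸ hy)
      exact ⟨a, rfl⟩⟩
  invFun e := ⟨fun a => e a, Subtype.val_injective.comp e.injective, by
    ext y
    simp only [mem_image, mem_univ, true_and]
    exact ⟨fun ⟨a, ha⟩ => ha ▸ (e a).2, fun hy => ⟨e.symm ⟨y, hy⟩, by simp⟩⟩⟩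
  left_inv _ := rfl
  right_inv _ := Equiv.ext fun _ => rfl

theorem ncard_injective_image_mem {T : Set (Finset β)} (hT : ∀ s ∈ T, #s = r) :
    {f : Fin r → β | Function.Injective f ∧ univ.image f ∈ T}.ncard =
      r.factorial * T.ncard := by
  let bySupport : {f : Fin r → β // Function.Injective f ∧ univ.image f ∈ T} ≃
      Σ s : T, {f : Fin r → β // Function.Injective f ∧ univ.image f = s} :=
    { toFun f := ⟨⟨univ.image f.1, f.2.2⟩, f.1, f.2.1, rfl⟩
      invFun f := ⟨f.2.1, f.2.2.1, by rw [f.2.2.2]; exact f.1.2⟩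
      left_inv _ := rfl
      right_inv f := Sigma.subtype_ext (Subtype.ext f.2.2.2) rfl }
  let toPerm (s : T) : {f : Fin r → β // Function.Injective f ∧ univ.image f = s} ≃
      Equiv.Perm (Fin r) :=
    (injectiveImageEqEquiv s.1).trans
      ((Equiv.refl _).equivCongr (Finset.equivFinOfCardEq (hT s.1 s.2)))
  calc _ = Nat.card (T × Equiv.Perm (Fin r)) :=
        Nat.card_congr ((bySupport.trans (Equiv.sigmaCongrRight toPerm)).trans
          (Equiv.sigmaEquivProd _ _))
    _ = _ := by rw [Nat.card_prod, Nat.card_perm, Nat.card_fin, Nat.card_coe_set_eq, mul_comm]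

end InjectiveTuples

section Board

variable {n r : ℕ}

lemma mem_board {p : ℕ × ℕ} : p ∈ board n ↔ 1 ≤ p.1 ∧ p.1 < p.2 ∧ p.2 ≤ n := by
  simp only [board, mem_filter, mem_product, mem_range]
  omega

lemma board_eq_filter (n : ℕ) : board n = {p ∈ Icc 1 n ×ˢ Icc 1 n | p.1 < p.2} := by
  ext p
  simp only [mem_board, mem_filter, mem_product, mem_Icc]
  omega

lemma card_board (n : ℕ) : #(board n) = n.choose 2 := by
  rw [board_eq_filter, card_product_filter_lt, Nat.card_Icc, Nat.add_sub_cancel]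

/-- `i ↦ i + 1`, identifying `Fin n` with `{1, …, n}`. -/
def finSuccOrderEmb (n : ℕ) : Fin n ↪o ℕ :=
  (Fin.succOrderEmb n).trans (Fin.valOrderEmb (n + 1))

abbrev shiftEmb (n : ℕ) : Fin n × Fin n ↪ ℕ × ℕ :=
  (finSuccOrderEmb n).toEmbedding.prodMap (finSuccOrderEmb n).toEmbedding

lemma map_finSuccOrderEmb_univ (n : ℕ) :
    univ.map (finSuccOrderEmb n).toEmbedding = Icc 1 n := by
  ext a
  simp only [Finset.mem_map, mem_univ, true_and, mem_Icc]
  constructor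
  · rintro ⟨i, rfl⟩
    exact ⟨Nat.le_add_left 1 i, i.isLt⟩
  · intro ha
    exact ⟨⟨a - 1, by omega⟩, by simp [finSuccOrderEmb]; omega⟩

lemma map_shiftEmb_univ (n : ℕ) :
    (univ : Finset (Fin n × Fin n)).map (shiftEmb n) = Icc 1 n ×ˢ Icc 1 n := by
  rw [← univ_product_univ, prodMap_map_product, map_finSuccOrderEmb_univ]

def nonAttackingSets (n r : ℕ) : Set (Finset (ℕ × ℕ)) :=
  {s | s ⊆ board n ∧ #s = r ∧ (∀ p ∈ s, ∀ q ∈ s, p ≠ q → p.1 ≠ q.1) ∧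
    (∀ p ∈ s, ∀ q ∈ s, p ≠ q → p.2 ≠ q.2)}

lemma mem_nonAttackingSets_iff {s : Finset (ℕ × ℕ)} :
    s ∈ nonAttackingSets n r ↔ s ⊆ board n ∧ IsNonAttacking s ∧ #s = r := by
  rw [nonAttackingSets, Set.mem_ofPred_eq]
  exact ⟨fun ⟨hB, hr, hfst, hsnd⟩ => ⟨hB, ⟨fun p hp => (mem_board.1 (hB hp)).2.1,
      Set.injOn_iff_pairwise_ne.2 hfst, Set.injOn_iff_pairwise_ne.2 hsnd⟩, hr⟩,
    fun ⟨hB, hs, hr⟩ => ⟨hB, hr, Set.injOn_iff_pairwise_ne.1 hs.injOn_fst,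
      Set.injOn_iff_pairwise_ne.1 hs.injOn_snd⟩⟩

lemma IsNonAttacking.subset_board_iff {s : Finset (ℕ × ℕ)} (hs : IsNonAttacking s) :
    s ⊆ board n ↔ s ⊆ Icc 1 n ×ˢ Icc 1 n := by
  simp only [board_eq_filter, subset_iff, mem_filter]
  exact ⟨fun h p hp => (h hp).1, fun h p hp => ⟨h hp, hs.lt p hp⟩⟩

lemma nonAttackingSets_eq_image (n r : ℕ) :
    nonAttackingSets n r = (·.map (shiftEmb n)) '' {t | IsNonAttacking t ∧ #t = r} := by
  ext s
  simp only [mem_nonAttackingSets_iff, Set.mem_image, Set.mem_ofPred_eq]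
  constructor
  · rintro ⟨hB, hs, hr⟩
    obtain ⟨t, -, rfl⟩ := subset_map_iff.1 (map_shiftEmb_univ n ▸ hs.subset_board_iff.1 hB)
    exact ⟨t, ⟨(IsNonAttacking.map_iff _).1 hs, by rwa [card_map] at hr⟩, rfl⟩
  · rintro ⟨t, ⟨ht, hr⟩, rfl⟩
    have hs := (IsNonAttacking.map_iff (finSuccOrderEmb n)).2 ht
    refine ⟨hs.subset_board_iff.2 ?_, hs, by rwa [card_map]⟩
    exact map_shiftEmb_univ n ▸ map_subset_map.2 (subset_univ t)

theorem ncard_nonAttackingSets (hr : r ≤ n) :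
    (nonAttackingSets n r).ncard = stirling2 n (n - r) := by
  rw [nonAttackingSets_eq_image, Set.ncard_image_of_injective _ (Finset.map_injective _),
    ncard_isNonAttacking_card_eq (by rwa [Fintype.card_fin]), Fintype.card_fin, stirling2]

end Board

lemma WRR_eq_zero_iff {r : ℕ} {f : Fin r → ℕ × ℕ} :
    WRR r f = 0 ↔ Function.Injective (Prod.fst ∘ f) := by
  simp only [WRR, card_eq_zero, filter_eq_empty_iff, mem_univ, true_implies, not_and, Prod.forall]
  exact ⟨fun h => .of_lt_imp_ne h, fun h a b hab => h.ne hab.ne⟩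

lemma WCC_eq_zero_iff {r : ℕ} {f : Fin r → ℕ × ℕ} :
    WCC r f = 0 ↔ Function.Injective (Prod.snd ∘ f) := by
  simp only [WCC, card_eq_zero, filter_eq_empty_iff, mem_univ, true_implies, not_and, Prod.forall]
  exact ⟨fun h => .of_lt_imp_ne h, fun h a b hab => h.ne hab.ne⟩

lemma nonAttacking_placements_eq (n r : ℕ) :
    {f : Fin r → ℕ × ℕ | (∀ a, f a ∈ board n) ∧ WRR r f + WCC r f = 0}
      = {f | Function.Injective f ∧ univ.image f ∈ nonAttackingSets n r} := by
  ext f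
  simp only [Set.mem_ofPred_eq, mem_nonAttackingSets_iff, Nat.add_eq_zero_iff, WRR_eq_zero_iff,
    WCC_eq_zero_iff, image_subset_iff, mem_univ, true_implies]
  constructor
  · rintro ⟨hB, hfst, hsnd⟩
    have hf : Function.Injective f := hfst.of_comp
    have hlt (a : Fin r) : (f a).1 < (f a).2 := (mem_board.1 (hB a)).2.1
    refine ⟨hf, hB, (IsNonAttacking.image_univ_iff hf).2 ⟨hlt, hfst, hsnd⟩, ?_⟩
    rw [card_image_of_injective _ hf, card_univ, Fintype.card_fin]
  · rintro ⟨hf, hB, hs, -⟩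
    exact ⟨hB, ((IsNonAttacking.image_univ_iff hf).1 hs).2⟩

theorem no_attack_set_partition_general (n r : ℕ) (hr : r ≤ n) :
    rookProb n r (fun f => WRR r f + WCC r f = 0)
        = (r.factorial : ℝ) * (stirling2 n (n - r) : ℝ) / (n.choose 2 : ℝ) ^ r ∧
    {s : Finset (ℕ × ℕ) | s ⊆ board n ∧ s.card = r ∧
        (∀ p ∈ s, ∀ q ∈ s, p ≠ q → p.1 ≠ q.1) ∧
        (∀ p ∈ s, ∀ q ∈ s, p ≠ q → p.2 ≠ q.2)}.ncard = stirling2 n (n - r) := by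
  have hsets : (nonAttackingSets n r).ncard = stirling2 n (n - r) := ncard_nonAttackingSets hr
  refine ⟨?_, hsets⟩
  have hplacements := ncard_injective_image_mem (T := nonAttackingSets n r)
    fun s hs => (mem_nonAttackingSets_iff.1 hs).2.2
  rw [rookProb, nonAttacking_placements_eq, hplacements, hsets, card_board]
  push_cast
  ring

/-- placing `r ≤ n` distinguishable rooks independently and uniformly at random on
`B_n`, `n ≥ 2`, the probability that no two rooks attack in the set-partition sense (no two in
the same row, no two in the same column) equals `r!·S(n, n−r)/C(n,2)^r`; equivalently, the
number of `r`-element subsets of `B_n` whose first coordinates are pairwise distinct and whose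
second coordinates are pairwise distinct equals `S(n, n−r)`. -/
theorem no_attack_set_partition (n r : ℕ) (hn : 2 ≤ n) (hr : r ≤ n) :
    rookProb n r (fun f => WRR r f + WCC r f = 0)
        = (r.factorial : ℝ) * (stirling2 n (n - r) : ℝ) / (n.choose 2 : ℝ) ^ r ∧
    {s : Finset (ℕ × ℕ) | s ⊆ board n ∧ s.card = r ∧
        (∀ p ∈ s, ∀ q ∈ s, p ≠ q → p.1 ≠ q.1) ∧
        (∀ p ∈ s, ∀ q ∈ s, p ≠ q → p.2 ≠ q.2)}.ncard = stirling2 n (n - r) :=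
  no_attack_set_partition_general n r hr
end

section
/- Let n ≥ 2 and 1 ≤ k ≤ n, set r = n − k, and define λ := (4/3)·binomial(r,2)·(n − 1/2)/(n(n−1)), f_1 := binomial(r,2)·(2r−3)·((4/(3n))·((n−1/2)/(n−1)))², and f_2 := binomial(r,2)·(2r−3)/binomial(n,2). Then the unsigned Stirling number of the first kind satisfies (binomial(n,2)^r / r!) · e^{−λ} · (1 − e^{λ}(f_1 + f_2)) ≤ s(n,k) ≤ (binomial(n,2)^r / r!) · e^{−λ} · (1 + e^{λ}(f_1 + f_2)). -/
/-!
Splitting a permutation of `Fin (n + 1)` by the image of `0` gives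
`s(n+1, k) = n s(n, k) + s(n, k-1)`, hence `s(n, k) = e_r(0, 1, …, n-1)` with `r = n - k`.
Normalised to the probability vector `y_j = j / C(n,2)`, `D_r = r! e_r(y)` is the probability
that `r` independent `y`-distributed draws are pairwise distinct, which is close to
`exp(-C(r,2) a)` with `a = ∑ y_j²`. Truncations of Newton's identities are one-sided bounds for
nonnegative weights, and they yield `|D_{m+1} - (1 - m a) D_m| ≤ m(m-1)(a² + q)` with
`q = ∑ y_j³`; comparing with `exp(-m a) = 1 - m a + O((m a)²)` and summing over `m < r` proves
the estimate. For these weights `a = (4/3)(n - 1/2)/(n(n-1))` and `q = 1/C(n,2)`.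
-/

open Finset

def numCycles {n : ℕ} (σ : Equiv.Perm (Fin n)) : ℕ :=
  σ.cycleType.card + (Finset.univ.filter fun x => σ x = x).card

noncomputable def stirling1 (n k : ℕ) : ℕ :=
  Nat.card {σ : Equiv.Perm (Fin n) // numCycles σ = k}

namespace Equiv.Perm

variable {α : Type*} [Fintype α] [DecidableEq α]

theorem card_parts_partition (σ : Perm α) :
    Multiset.card σ.partition.parts
      = Multiset.card σ.cycleType + (Fintype.card α - #σ.support) := by
  simp [parts_partition]

theorem IsCycle.card_cycleType_swap_mul {c : Perm α} (hc : c.IsCycle) {a : α} (ha : c a ≠ a) :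
    Multiset.card (swap a (c a) * c).cycleType + #c.support
      = #(swap a (c a) * c).support + 2 := by
  by_cases hca : c (c a) = a
  · rw [hc.eq_swap_of_apply_apply_eq_self ha hca, swap_apply_left, swap_mul_self,
      card_support_swap ha.symm]
    simp
  · have hd := hc.swap_mul ha hca
    rw [card_cycleType_eq_one.mpr hd, support_swap_mul_eq c a hca,
      card_sdiff_of_subset (by simpa using ha)]
    have := card_pos.mpr ⟨a, mem_support.mpr ha⟩
    simp only [card_singleton]
    omega

theorem card_parts_partition_swap_mul {σ : Perm α} {a : α} (ha : σ a ≠ a) :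
    Multiset.card (swap a (σ a) * σ).partition.parts = Multiset.card σ.partition.parts + 1 := by
  set c := σ.cycleOf a
  have hc : c.IsCycle := isCycle_cycleOf σ ha
  have hca : c a = σ a := cycleOf_apply_self σ a
  have hρc : (σ * c⁻¹).Disjoint c := disjoint_mul_inv_of_mem_cycleFactorsFinset
    (cycleOf_mem_cycleFactorsFinset_iff.mpr (mem_support.mpr ha))
  have hswap : (swap a (σ a)).support ⊆ c.support := by
    have hac : a ∈ c.support := mem_support.mpr (hca ▸ ha)
    rw [support_swap (Ne.symm ha), ← hca]
    exact insert_subset hac (singleton_subset_iff.mpr (apply_mem_support.mpr hac))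
  have hd : (swap a (σ a) * c).support ⊆ c.support :=
    (support_mul_le _ _).trans (sup_le hswap le_rfl)
  have hρd : (σ * c⁻¹).Disjoint (swap a (σ a) * c) := hρc.mono le_rfl hd
  have hτ : swap a (σ a) * σ = σ * c⁻¹ * (swap a (σ a) * c) := by
    rw [← mul_assoc, ((hρc.mono le_rfl hswap).commute).eq, mul_assoc, inv_mul_cancel_right]
  have hσct := hρc.cycleType_mul
  have hσs := hρc.card_support_mul
  rw [inv_mul_cancel_right] at hσct hσs
  have hcycle := hca ▸ hc.card_cycleType_swap_mul (hca ▸ ha)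
  have hτ_le := card_le_univ (swap a (σ a) * σ).support
  have hσ_le := card_le_univ σ.support
  rw [card_parts_partition, card_parts_partition, hσct, hσs, hτ, hρd.cycleType_mul,
    hρd.card_support_mul, Multiset.card_add, Multiset.card_add, card_cycleType_eq_one.mpr hc]
  rw [hτ, hρd.card_support_mul] at hτ_le
  omega

theorem decomposeFin_symm_zero {n : ℕ} (e : Perm (Fin n)) :
    decomposeFin.symm (0, e) = e.extendDomain (finSuccAboveEquiv 0) := by
  ext x
  refine Fin.cases ?_ (fun i => ?_) x
  · rw [decomposeFin_symm_apply_zero, extendDomain_apply_not_subtype _ _ (by simp)]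
  · have hi : i.succ = (finSuccAboveEquiv 0 i : Fin (n + 1)) := by
      simp [finSuccAboveEquiv_apply]
    rw [decomposeFin_symm_apply_succ, swap_self, refl_apply, hi, extendDomain_apply_image,
      finSuccAboveEquiv_apply]
    simp

theorem decomposeFin_symm_eq_swap_mul {n : ℕ} (p : Fin (n + 1)) (e : Perm (Fin n)) :
    decomposeFin.symm (p, e) = swap 0 p * decomposeFin.symm (0, e) := by
  ext x
  refine Fin.cases ?_ (fun i => ?_) x <;> simp [decomposeFin_symm_apply_succ]

theorem card_parts_partition_decomposeFin_symm {n : ℕ} (p : Fin (n + 1))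
    (e : Perm (Fin n)) :
    Multiset.card (decomposeFin.symm (p, e)).partition.parts
      = Multiset.card e.partition.parts + if p = 0 then 1 else 0 := by
  have hzero : Multiset.card (decomposeFin.symm (0, e)).partition.parts
      = Multiset.card e.partition.parts + 1 := by
    have := card_le_univ e.support
    rw [decomposeFin_symm_zero, card_parts_partition, card_parts_partition,
      cycleType_extendDomain, card_support_extend_domain]
    simp only [Fintype.card_fin] at this ⊢
    omega
  split_ifs with hp
  · rw [hp, hzero]
  · have hσ0 : decomposeFin.symm (p, e) 0 ≠ 0 := by rwa [decomposeFin_symm_apply_zero]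
    have := card_parts_partition_swap_mul hσ0
    have hswap : swap 0 p * decomposeFin.symm (p, e) = decomposeFin.symm (0, e) := by
      rw [decomposeFin_symm_eq_swap_mul, ← mul_assoc, swap_mul_self, one_mul]
    rw [decomposeFin_symm_apply_zero, hswap, hzero] at this
    omega

end Equiv.Perm

open Equiv Equiv.Perm

theorem numCycles_eq_card_parts {n : ℕ} (σ : Perm (Fin n)) :
    numCycles σ = Multiset.card σ.partition.parts := by
  have := card_filter_add_card_filter_not (s := univ) (p := fun x => σ x = x)
  rw [numCycles, card_parts_partition, Fintype.card_fin]
  rw [card_univ, Fintype.card_fin] at this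
  simp only [support, ne_eq]
  omega

theorem stirling1_eq_card (n k : ℕ) :
    stirling1 n k = #{σ : Perm (Fin n) | numCycles σ = k} := by
  rw [stirling1, Nat.card_eq_fintype_card, Fintype.card_subtype]

theorem stirling1_succ (n k : ℕ) :
    stirling1 (n + 1) k = #{e : Perm (Fin n) | numCycles e + 1 = k} + n * stirling1 n k := by
  simp only [stirling1_eq_card, card_filter]
  rw [← decomposeFin.symm.sum_comp, Fintype.sum_prod_type, Fin.sum_univ_succ]
  simp [numCycles_eq_card_parts, card_parts_partition_decomposeFin_symm, Fin.succ_ne_zero]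

theorem stirling1_eq_stirlingFirst (n k : ℕ) : stirling1 n k = Nat.stirlingFirst n k := by
  induction n generalizing k with
  | zero =>
    rw [stirling1_eq_card]
    cases k <;> simp [numCycles, Finset.filter_singleton]
  | succ n ih =>
    rw [stirling1_succ, ih]
    cases k with
    | zero => cases n <;> simp
    | succ k =>
      rw [add_comm, Nat.stirlingFirst_succ_succ, ← ih k, stirling1_eq_card]
      simp

theorem Multiset.esymm_cons_succ {R : Type*} [CommSemiring R] (a : R) (s : Multiset R) (k : ℕ) :
    (a ::ₘ s).esymm (k + 1) = s.esymm (k + 1) + a * s.esymm k := by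
  simp [Multiset.esymm, Multiset.powersetCard_cons, Multiset.sum_map_mul_left]

theorem Multiset.esymm_range_succ_self (n : ℕ) : (Multiset.range (n + 1)).esymm (n + 1) = 0 := by
  have := Multiset.powersetCard_self (Multiset.range (n + 1))
  rw [Multiset.card_range] at this
  rw [Multiset.esymm, this, Multiset.map_singleton, Multiset.sum_singleton,
    Multiset.prod_eq_zero (Multiset.mem_range.mpr n.succ_pos)]

theorem Nat.stirlingFirst_eq_esymm_range {n k : ℕ} (hk : k ≤ n) :
    Nat.stirlingFirst n k = (Multiset.range n).esymm (n - k) := by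
  induction n generalizing k with
  | zero => simp_all [Multiset.esymm]
  | succ n ih =>
    rcases Nat.eq_zero_or_pos k with rfl | hk0
    · rw [Nat.stirlingFirst_succ_zero, Nat.sub_zero, Multiset.esymm_range_succ_self]
    rcases hk.eq_or_lt with rfl | hlt
    · simp [Nat.stirlingFirst_self, Multiset.esymm]
    rw [Nat.stirlingFirst_succ_left _ _ hk0.ne', ih (by omega), ih (by omega),
      show n + 1 - k = n - k + 1 by omega, show n - (k - 1) = n - k + 1 by omega,
      Multiset.range_succ, Multiset.esymm_cons_succ, add_comm]

theorem Multiset.esymm_map_ringHom {R S : Type*} [CommSemiring R] [CommSemiring S] (f : R →+* S)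
    (s : Multiset R) (k : ℕ) : (s.map f).esymm k = f (s.esymm k) := by
  simp [Multiset.esymm, Multiset.powersetCard_map, map_multiset_sum, Multiset.map_map,
    map_multiset_prod]

theorem Finset.sum_powersetCard_succ_sum {ι M : Type*} [DecidableEq ι] [AddCommMonoid M]
    (s : Finset ι) (m : ℕ) (F : Finset ι → ι → M) :
    ∑ A ∈ s.powersetCard (m + 1), ∑ j ∈ A, F A j
      = ∑ B ∈ s.powersetCard m, ∑ j ∈ s \ B, F (insert j B) j := by
  rw [sum_sigma', sum_sigma']
  refine sum_nbij' (fun p => ⟨p.1.erase p.2, p.2⟩) (fun p => ⟨insert p.2 p.1, p.2⟩)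
    ?_ ?_ ?_ ?_ ?_
  · rintro ⟨A, j⟩ h
    simp only [mem_sigma, mem_powersetCard] at h ⊢
    refine ⟨⟨(erase_subset _ _).trans h.1.1, ?_⟩,
      mem_sdiff.mpr ⟨h.1.1 h.2, notMem_erase _ _⟩⟩
    rw [card_erase_of_mem h.2, h.1.2, Nat.add_sub_cancel]
  · rintro ⟨B, j⟩ h
    simp only [mem_sigma, mem_powersetCard, mem_sdiff] at h ⊢
    exact ⟨⟨insert_subset h.2.1 h.1.1, by rw [card_insert_of_notMem h.2.2, h.1.2]⟩,
      mem_insert_self _ _⟩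
  · rintro ⟨A, j⟩ h
    simp [insert_erase (mem_sigma.mp h).2]
  · rintro ⟨B, j⟩ h
    simp [erase_insert (mem_sdiff.mp (mem_sigma.mp h).2).2]
  · rintro ⟨A, j⟩ h
    simp [insert_erase (mem_sigma.mp h).2]

section Newton

variable {ι R : Type*} [CommRing R] (s : Finset ι) (y : ι → R)

/- Iterating `esymmPsum_succ_add` from `t = 0` gives Newton's identity for `(m + 1) e_{m+1}`
truncated after `t` terms, with remainder `± esymmPsum t (m + 1 - t)`. -/
def esymmPsum (t m : ℕ) : R :=
  ∑ A ∈ s.powersetCard m, (∏ i ∈ A, y i) * ∑ i ∈ A, y i ^ t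

theorem esymmPsum_zero_left (m : ℕ) : esymmPsum s y 0 m = m * (s.val.map y).esymm m := by
  rw [esymmPsum, esymm_map_val, mul_sum]
  refine sum_congr rfl fun A hA => ?_
  simp [(mem_powersetCard.mp hA).2, mul_comm]

theorem esymmPsum_zero_right (t : ℕ) : esymmPsum s y t 0 = 0 := by
  simp [esymmPsum]

theorem esymmPsum_succ_add [DecidableEq ι] (t m : ℕ) :
    esymmPsum s y t (m + 1) + esymmPsum s y (t + 1) m
      = (∑ i ∈ s, y i ^ (t + 1)) * (s.val.map y).esymm m := by
  have hsplit : esymmPsum s y t (m + 1)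
      = ∑ B ∈ s.powersetCard m, (∏ i ∈ B, y i) * ∑ j ∈ s \ B, y j ^ (t + 1) := by
    simp only [esymmPsum, mul_sum]
    rw [sum_powersetCard_succ_sum s m fun A j => (∏ i ∈ A, y i) * y j ^ t]
    refine sum_congr rfl fun B _ => sum_congr rfl fun j hj => ?_
    rw [prod_insert (mem_sdiff.mp hj).2, pow_succ]
    ring
  rw [hsplit, esymmPsum, esymm_map_val, ← sum_add_distrib, mul_sum (s.powersetCard m)]
  refine sum_congr rfl fun B hB => ?_
  rw [← sum_sdiff (f := fun i => y i ^ (t + 1)) (mem_powersetCard.mp hB).1]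
  ring

end Newton

theorem sum_range_mul_two_mul_sub_one_le (r : ℕ) :
    ∑ m ∈ range r, (m : ℝ) * (2 * m - 1) ≤ r.choose 2 * (2 * r - 3) := by
  induction r with
  | zero => simp
  | succ r ih =>
    rw [sum_range_succ]
    refine (add_le_add_left ih _).trans ?_
    rw [Nat.cast_choose_two, Nat.cast_choose_two]
    rcases r with _ | r
    · norm_num
    · push_cast
      nlinarith [sq_nonneg (r : ℝ)]

theorem one_le_choose_two_mul_sq {r : ℕ} {a : ℝ} (ha : 0 ≤ a) (h : ∃ m < r, 1 < m * a) :
    1 ≤ r.choose 2 * (2 * r - 3) * a ^ 2 := by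
  obtain ⟨m, hm, hma⟩ := h
  have hm1 : (m + 1 : ℝ) ≤ r := by exact_mod_cast hm
  have hr2 : (2 : ℝ) ≤ r := by
    have : m ≠ 0 := by rintro rfl; simp at hma; linarith
    exact_mod_cast (by omega : 2 ≤ r)
  have hra : 1 ≤ ((r - 1 : ℝ) * a) ^ 2 :=
    one_le_pow₀ (hma.le.trans (mul_le_mul_of_nonneg_right (by linarith) ha))
  have h : 2 * (r - 1 : ℝ) ≤ (r - 1) * (r * (r - 1) * (2 * r - 3) * a ^ 2) := calc
    2 * (r - 1 : ℝ) ≤ r * (2 * r - 3) := by nlinarith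
    _ ≤ r * (2 * r - 3) * ((r - 1) * a) ^ 2 := le_mul_of_one_le_right (by nlinarith) hra
    _ = (r - 1) * (r * (r - 1) * (2 * r - 3) * a ^ 2) := by ring
  rw [Nat.cast_choose_two]
  nlinarith

section Real

variable {ι : Type*} {s : Finset ι} {y : ι → ℝ}

noncomputable def factorialEsymm (s : Finset ι) (y : ι → ℝ) (m : ℕ) : ℝ :=
  m.factorial * (s.val.map y).esymm m

theorem esymmPsum_nonneg (hy : ∀ i ∈ s, 0 ≤ y i) (t m : ℕ) : 0 ≤ esymmPsum s y t m :=
  sum_nonneg fun _ hA =>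
    have hAs := (mem_powersetCard.mp hA).1
    mul_nonneg (prod_nonneg fun i hi => hy i (hAs hi))
      (sum_nonneg fun i hi => pow_nonneg (hy i (hAs hi)) t)

theorem factorialEsymm_nonneg (hy : ∀ i ∈ s, 0 ≤ y i) (m : ℕ) :
    0 ≤ factorialEsymm s y m := by
  rw [factorialEsymm, esymm_map_val]
  exact mul_nonneg (Nat.cast_nonneg _) (sum_nonneg fun A hA =>
    prod_nonneg fun i hi => hy i ((mem_powersetCard.mp hA).1 hi))

theorem factorialEsymm_zero : factorialEsymm s y 0 = 1 := by
  simp [factorialEsymm, Multiset.esymm]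

variable [DecidableEq ι]

theorem succ_mul_esymm_succ (hs : ∑ i ∈ s, y i = 1) (m : ℕ) :
    ((m + 1 : ℕ) : ℝ) * (s.val.map y).esymm (m + 1)
      = (s.val.map y).esymm m - esymmPsum s y 1 m := by
  have := esymmPsum_succ_add s y 0 m
  rw [esymmPsum_zero_left, zero_add] at this
  simp only [pow_one, hs, one_mul] at this
  push_cast at this ⊢
  linarith

theorem factorialEsymm_one (hs : ∑ i ∈ s, y i = 1) : factorialEsymm s y 1 = 1 := by
  have := succ_mul_esymm_succ hs 0
  rw [esymmPsum_zero_right] at this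
  simpa [factorialEsymm, Multiset.esymm] using this

theorem factorialEsymm_two (hs : ∑ i ∈ s, y i = 1) :
    factorialEsymm s y 2 = 1 - ∑ i ∈ s, y i ^ 2 := by
  have h1 : ((1 + 1 : ℕ) : ℝ) * (s.val.map y).esymm 2
      = (s.val.map y).esymm 1 - esymmPsum s y 1 1 := succ_mul_esymm_succ hs 1
  have h2 : esymmPsum s y 1 1 + esymmPsum s y 2 0
      = (∑ i ∈ s, y i ^ 2) * (s.val.map y).esymm 0 := esymmPsum_succ_add s y 1 0
  have h0 : (s.val.map y).esymm 1 = 1 := by simpa [factorialEsymm] using factorialEsymm_one hs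
  rw [esymmPsum_zero_right, add_zero, Multiset.esymm, Multiset.powersetCard_zero_left] at h2
  simp only [factorialEsymm, Nat.factorial]
  simp only [Multiset.map_singleton, Multiset.prod_zero, Multiset.sum_singleton, mul_one] at h2
  push_cast at h1 ⊢
  linarith

theorem factorialEsymm_succ_le (hy : ∀ i ∈ s, 0 ≤ y i) (hs : ∑ i ∈ s, y i = 1) (m : ℕ) :
    factorialEsymm s y (m + 1) ≤ factorialEsymm s y m := by
  have h := succ_mul_esymm_succ hs m
  have hG := esymmPsum_nonneg hy 1 m
  rw [factorialEsymm, factorialEsymm, Nat.factorial_succ, Nat.cast_mul, mul_assoc, mul_left_comm, h]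
  exact mul_le_mul_of_nonneg_left (by linarith) (Nat.cast_nonneg _)

theorem factorialEsymm_le_one (hy : ∀ i ∈ s, 0 ≤ y i) (hs : ∑ i ∈ s, y i = 1) (m : ℕ) :
    factorialEsymm s y m ≤ 1 := by
  induction m with
  | zero => rw [factorialEsymm_zero]
  | succ m ih => exact (factorialEsymm_succ_le hy hs m).trans ih

theorem factorialEsymm_succ_le_add (hy : ∀ i ∈ s, 0 ≤ y i) (hs : ∑ i ∈ s, y i = 1)
    (m : ℕ) :
    factorialEsymm s y (m + 1)
      ≤ factorialEsymm s y (m + 2) + (m + 1) * (∑ i ∈ s, y i ^ 2) * factorialEsymm s y m := by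
  have h1 : ((m + 2 : ℕ) : ℝ) * (s.val.map y).esymm (m + 2)
      = (s.val.map y).esymm (m + 1) - esymmPsum s y 1 (m + 1) := succ_mul_esymm_succ hs (m + 1)
  have h2 : esymmPsum s y 1 (m + 1) + esymmPsum s y 2 m
      = (∑ i ∈ s, y i ^ 2) * (s.val.map y).esymm m := esymmPsum_succ_add s y 1 m
  have hG := mul_nonneg (Nat.cast_nonneg (m + 1).factorial) (esymmPsum_nonneg hy 2 m)
  simp only [factorialEsymm, Nat.factorial_succ] at hG ⊢
  push_cast at h1 hG ⊢
  linear_combination hG - (m + 1) * m.factorial * (h1 - h2)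

theorem factorialEsymm_add_three_le (hy : ∀ i ∈ s, 0 ≤ y i) (hs : ∑ i ∈ s, y i = 1)
    (m : ℕ) :
    factorialEsymm s y (m + 3)
      ≤ factorialEsymm s y (m + 2) - (m + 2) * (∑ i ∈ s, y i ^ 2) * factorialEsymm s y (m + 1)
        + (m + 2) * (m + 1) * (∑ i ∈ s, y i ^ 3) * factorialEsymm s y m := by
  have h1 : ((m + 3 : ℕ) : ℝ) * (s.val.map y).esymm (m + 3)
      = (s.val.map y).esymm (m + 2) - esymmPsum s y 1 (m + 2) := succ_mul_esymm_succ hs (m + 2)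
  have h2 : esymmPsum s y 1 (m + 2) + esymmPsum s y 2 (m + 1)
      = (∑ i ∈ s, y i ^ 2) * (s.val.map y).esymm (m + 1) := esymmPsum_succ_add s y 1 (m + 1)
  have h3 : esymmPsum s y 2 (m + 1) + esymmPsum s y 3 m
      = (∑ i ∈ s, y i ^ 3) * (s.val.map y).esymm m := esymmPsum_succ_add s y 2 m
  have hG := mul_nonneg (Nat.cast_nonneg (m + 2).factorial) (esymmPsum_nonneg hy 3 m)
  simp only [factorialEsymm, Nat.factorial_succ] at hG ⊢
  push_cast at h1 hG ⊢
  linear_combination hG + (m + 2) * (m + 1) * m.factorial * (h1 - h2 + h3)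

theorem abs_factorialEsymm_succ_sub_le (hy : ∀ i ∈ s, 0 ≤ y i) (hs : ∑ i ∈ s, y i = 1)
    (m : ℕ) :
    |factorialEsymm s y (m + 1) - (1 - m * ∑ i ∈ s, y i ^ 2) * factorialEsymm s y m|
      ≤ m * (m - 1) * ((∑ i ∈ s, y i ^ 2) ^ 2 + ∑ i ∈ s, y i ^ 3) := by
  have ha : 0 ≤ ∑ i ∈ s, y i ^ 2 := sum_nonneg fun i _ => sq_nonneg (y i)
  have hq : 0 ≤ ∑ i ∈ s, y i ^ 3 := sum_nonneg fun i hi => pow_nonneg (hy i hi) 3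
  match m with
  | 0 => simp [factorialEsymm_zero, factorialEsymm_one hs]
  | 1 => simp [factorialEsymm_one hs, factorialEsymm_two hs]
  | m + 2 =>
    have hD0 := factorialEsymm_nonneg hy m
    have hD0' := factorialEsymm_le_one hy hs m
    have hD1 : factorialEsymm s y (m + 2) ≤ factorialEsymm s y (m + 1) :=
      factorialEsymm_succ_le hy hs (m + 1)
    have hF3 := factorialEsymm_succ_le_add hy hs m
    have hF3' : factorialEsymm s y (m + 2) ≤ factorialEsymm s y (m + 3)
        + ((m + 1 : ℕ) + 1) * (∑ i ∈ s, y i ^ 2) * factorialEsymm s y (m + 1) :=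
      factorialEsymm_succ_le_add hy hs (m + 1)
    have hF1 := factorialEsymm_add_three_le hy hs m
    have hm : (0 : ℝ) ≤ (m + 2) * (m + 1) := by positivity
    have hma : (0 : ℝ) ≤ (m + 2) * ∑ i ∈ s, y i ^ 2 := by positivity
    show |factorialEsymm s y (m + 3) - _ * _| ≤ _
    push_cast at hF3' ⊢
    rw [abs_le]
    constructor
    · linarith [mul_le_mul_of_nonneg_left hF3 hma,
        mul_nonneg (mul_nonneg hm (sq_nonneg (∑ i ∈ s, y i ^ 2))) (sub_nonneg.mpr hD0'),
        mul_nonneg hm hq]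
    · linarith [mul_nonneg (mul_nonneg hm hq) (sub_nonneg.mpr hD0'),
        mul_nonneg hma (sub_nonneg.mpr hD1),
        mul_nonneg hm (sq_nonneg (∑ i ∈ s, y i ^ 2))]

theorem abs_factorialEsymm_sub_exp_le_sum (hy : ∀ i ∈ s, 0 ≤ y i) (hs : ∑ i ∈ s, y i = 1)
    {r : ℕ} (hr : ∀ m < r, m * ∑ i ∈ s, y i ^ 2 ≤ 1) :
    |factorialEsymm s y r - Real.exp (-(r.choose 2 * ∑ i ∈ s, y i ^ 2))|
      ≤ ∑ m ∈ range r,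
          m * (2 * m - 1) * ((∑ i ∈ s, y i ^ 2) ^ 2 + ∑ i ∈ s, y i ^ 3) := by
  have ha : 0 ≤ ∑ i ∈ s, y i ^ 2 := sum_nonneg fun i _ => sq_nonneg (y i)
  have hq : 0 ≤ ∑ i ∈ s, y i ^ 3 := sum_nonneg fun i hi => pow_nonneg (hy i hi) 3
  induction r with
  | zero => simp [factorialEsymm_zero]
  | succ r ih =>
    set a := ∑ i ∈ s, y i ^ 2
    set q := ∑ i ∈ s, y i ^ 3
    set E := Real.exp (-(r.choose 2 * a))
    have hra : r * a ≤ 1 := hr r r.lt_succ_self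
    have hE : 0 < E ∧ E ≤ 1 := ⟨Real.exp_pos _, Real.exp_le_one_iff.mpr (by
      have : 0 ≤ (r.choose 2 : ℝ) * a := by positivity
      linarith)⟩
    have hexp : Real.exp (-((r + 1).choose 2 * a)) = Real.exp (-(r * a)) * E := by
      rw [← Real.exp_add, Nat.choose_succ_succ', Nat.choose_one_right]
      push_cast
      ring_nf
    have hstep := abs_factorialEsymm_succ_sub_le hy hs r
    have hlin := Real.abs_exp_sub_one_sub_id_le (x := -(r * a))
      (by rw [abs_neg, abs_of_nonneg (by positivity)]; exact hra)
    have ih' := ih fun m hm => hr m (hm.trans r.lt_succ_self)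
    rw [hexp, sum_range_succ]
    calc |factorialEsymm s y (r + 1) - Real.exp (-(r * a)) * E|
        = |(factorialEsymm s y (r + 1) - (1 - r * a) * factorialEsymm s y r)
            + (1 - r * a) * (factorialEsymm s y r - E)
            - (Real.exp (-(r * a)) - 1 - -(r * a)) * E| := by ring_nf
      _ ≤ r * (r - 1) * (a ^ 2 + q) + 1 * |factorialEsymm s y r - E| + (-(r * a)) ^ 2 * 1 := by
        have hra0 : 0 ≤ r * a := by positivity
        refine (abs_sub _ _).trans (add_le_add ((abs_add_le _ _).trans (add_le_add hstep ?_)) ?_)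
        · rw [abs_mul]
          exact mul_le_mul_of_nonneg_right (abs_le.mpr ⟨by linarith, by linarith⟩)
            (abs_nonneg _)
        · rw [abs_mul, abs_of_pos hE.1]
          exact mul_le_mul hlin hE.2 hE.1.le (sq_nonneg _)
      _ ≤ _ := by nlinarith [mul_nonneg (sq_nonneg (r : ℝ)) hq]

theorem abs_factorialEsymm_sub_exp_le (hy : ∀ i ∈ s, 0 ≤ y i) (hs : ∑ i ∈ s, y i = 1)
    (r : ℕ) :
    |factorialEsymm s y r - Real.exp (-(r.choose 2 * ∑ i ∈ s, y i ^ 2))|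
      ≤ r.choose 2 * (2 * r - 3) * ((∑ i ∈ s, y i ^ 2) ^ 2 + ∑ i ∈ s, y i ^ 3) := by
  have ha : 0 ≤ ∑ i ∈ s, y i ^ 2 := sum_nonneg fun i _ => sq_nonneg (y i)
  have hq : 0 ≤ ∑ i ∈ s, y i ^ 3 := sum_nonneg fun i hi => pow_nonneg (hy i hi) 3
  by_cases hr : ∀ m < r, m * ∑ i ∈ s, y i ^ 2 ≤ 1
  · refine (abs_factorialEsymm_sub_exp_le_sum hy hs hr).trans ?_
    rw [← sum_mul]
    exact mul_le_mul_of_nonneg_right (sum_range_mul_two_mul_sub_one_le r) (by positivity)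
  · have hD := factorialEsymm_nonneg hy r
    have hD' := factorialEsymm_le_one hy hs r
    have hE := Real.exp_pos (-(r.choose 2 * ∑ i ∈ s, y i ^ 2))
    have hE' : Real.exp (-(r.choose 2 * ∑ i ∈ s, y i ^ 2)) ≤ 1 :=
      Real.exp_le_one_iff.mpr (neg_nonpos.mpr (by positivity))
    have hbig := one_le_choose_two_mul_sq ha (by simpa using hr)
    have hC : (0 : ℝ) < r.choose 2 * (2 * r - 3) := by
      nlinarith [sq_nonneg (∑ i ∈ s, y i ^ 2)]
    rw [abs_le]
    constructor <;> nlinarith [mul_nonneg hC.le hq]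

end Real

theorem sum_range_cast_eq_choose_two (n : ℕ) : ∑ j ∈ range n, (j : ℝ) = n.choose 2 := by
  induction n with
  | zero => simp
  | succ n ih =>
    rw [sum_range_succ, ih, Nat.choose_succ_succ', Nat.choose_one_right]
    push_cast
    ring

theorem sum_range_cast_sq (n : ℕ) :
    ∑ j ∈ range n, (j : ℝ) ^ 2 = n * (n - 1) * (2 * n - 1) / 6 := by
  induction n with
  | zero => simp
  | succ n ih => rw [sum_range_succ, ih]; push_cast; ring

theorem sum_range_cast_cube (n : ℕ) :
    ∑ j ∈ range n, (j : ℝ) ^ 3 = (n.choose 2 : ℝ) ^ 2 := by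
  induction n with
  | zero => simp
  | succ n ih => rw [sum_range_succ, ih, Nat.cast_choose_two, Nat.cast_choose_two]; push_cast; ring

theorem stirling1_eq_mul_factorialEsymm {n k : ℕ} (hn : 2 ≤ n) (hkn : k ≤ n) :
    (stirling1 n k : ℝ) = (n.choose 2 : ℝ) ^ (n - k) / (n - k).factorial
      * factorialEsymm (range n) (fun j => (j : ℝ) / n.choose 2) (n - k) := by
  have hC : (n.choose 2 : ℝ) ≠ 0 := Nat.cast_ne_zero.mpr (Nat.choose_pos hn).ne'
  have hcast := Multiset.esymm_map_ringHom (Nat.castRingHom ℝ) (Multiset.range n) (n - k)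
  have hmap : (range n).val.map (fun j : ℕ => (j : ℝ) / n.choose 2)
      = ((Multiset.range n).map (Nat.cast : ℕ → ℝ)).map ((n.choose 2 : ℝ)⁻¹ • ·) := by
    simp [Multiset.map_map, div_eq_inv_mul]
  rw [Nat.coe_castRingHom] at hcast
  rw [stirling1_eq_stirlingFirst, Nat.stirlingFirst_eq_esymm_range hkn, ← hcast, factorialEsymm,
    hmap, ← Multiset.pow_smul_esymm, smul_eq_mul, inv_pow]
  field_simp

theorem sum_range_div_choose_two {n : ℕ} (hn : 2 ≤ n) :
    ∑ j ∈ range n, (j : ℝ) / n.choose 2 = 1 := by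
  rw [← sum_div, sum_range_cast_eq_choose_two,
    div_self (Nat.cast_ne_zero.mpr (Nat.choose_pos hn).ne')]

theorem sum_range_div_choose_two_sq {n : ℕ} (hn : 2 ≤ n) :
    ∑ j ∈ range n, ((j : ℝ) / n.choose 2) ^ 2
      = 4 / 3 * ((n : ℝ) - 1 / 2) / (n * (n - 1)) := by
  have hn1 : (n : ℝ) - 1 ≠ 0 := sub_ne_zero.mpr (by norm_cast; omega)
  have hn0 : (n : ℝ) ≠ 0 := by norm_cast; omega
  simp only [div_pow, ← sum_div, sum_range_cast_sq, Nat.cast_choose_two]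
  field_simp
  ring

theorem sum_range_div_choose_two_cube {n : ℕ} (hn : 2 ≤ n) :
    ∑ j ∈ range n, ((j : ℝ) / n.choose 2) ^ 3 = (n.choose 2 : ℝ)⁻¹ := by
  have hC : (n.choose 2 : ℝ) ≠ 0 := Nat.cast_ne_zero.mpr (Nat.choose_pos hn).ne'
  simp only [div_pow, ← sum_div, sum_range_cast_cube]
  field_simp

theorem stirling_first_kind_bounds_general (n k : ℕ) (hn : 2 ≤ n) (hkn : k ≤ n)
    (r : ℕ) (hr : r = n - k)
    (lam f₁ f₂ : ℝ)
    (hlam : lam = (4/3) * (r.choose 2 : ℝ) * ((n : ℝ) - 1/2) / ((n : ℝ) * ((n : ℝ) - 1)))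
    (hf₁ : f₁ = (r.choose 2 : ℝ) * (2 * (r : ℝ) - 3) *
      (4 / (3 * (n : ℝ)) * (((n : ℝ) - 1/2) / ((n : ℝ) - 1))) ^ 2)
    (hf₂ : f₂ = (r.choose 2 : ℝ) * (2 * (r : ℝ) - 3) / (n.choose 2 : ℝ)) :
    (n.choose 2 : ℝ) ^ r / (r.factorial : ℝ) * Real.exp (-lam) *
        (1 - Real.exp lam * (f₁ + f₂)) ≤ (stirling1 n k : ℝ) ∧
    (stirling1 n k : ℝ) ≤ (n.choose 2 : ℝ) ^ r / (r.factorial : ℝ) * Real.exp (-lam) *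
        (1 + Real.exp lam * (f₁ + f₂)) := by
  have hn0 : (n : ℝ) ≠ 0 := by norm_cast; omega
  have hn1 : (n : ℝ) - 1 ≠ 0 := sub_ne_zero.mpr (by norm_cast; omega)
  have key := abs_le.mp (abs_factorialEsymm_sub_exp_le (s := range n)
    (y := fun j => (j : ℝ) / n.choose 2) (fun j _ => by positivity)
    (sum_range_div_choose_two hn) r)
  simp only [sum_range_div_choose_two_sq hn, sum_range_div_choose_two_cube hn] at key
  rw [show r.choose 2 * (4 / 3 * ((n : ℝ) - 1 / 2) / (n * (n - 1))) = lam by rw [hlam]; ring,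
    show r.choose 2 * (2 * r - 3) * ((4 / 3 * ((n : ℝ) - 1 / 2) / (n * (n - 1))) ^ 2
      + (n.choose 2 : ℝ)⁻¹) = f₁ + f₂ by rw [hf₁, hf₂]; field_simp] at key
  have hT : (0 : ℝ) ≤ (n.choose 2 : ℝ) ^ r / r.factorial := by positivity
  have hexp : Real.exp (-lam) * Real.exp lam = 1 := by
    rw [← Real.exp_add, neg_add_cancel, Real.exp_zero]
  rw [stirling1_eq_mul_factorialEsymm hn hkn, ← hr]
  constructor
  · calc _ = (n.choose 2 : ℝ) ^ r / r.factorial * (Real.exp (-lam) - (f₁ + f₂)) := by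
          linear_combination -((n.choose 2 : ℝ) ^ r / r.factorial * (f₁ + f₂)) * hexp
      _ ≤ _ := mul_le_mul_of_nonneg_left (by linarith [key.1]) hT
  · calc _ ≤ (n.choose 2 : ℝ) ^ r / r.factorial * (Real.exp (-lam) + (f₁ + f₂)) :=
          mul_le_mul_of_nonneg_left (by linarith [key.2]) hT
      _ = _ := by linear_combination -((n.choose 2 : ℝ) ^ r / r.factorial * (f₁ + f₂)) * hexp

/-- for `n ≥ 2`, `1 ≤ k ≤ n` and `r = n − k`, with
`λ = (4/3)·C(r,2)·(n−1/2)/(n(n−1))`, `f₁ = C(r,2)(2r−3)((4/(3n))·((n−1/2)/(n−1)))²` and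
`f₂ = C(r,2)(2r−3)/C(n,2)`, the unsigned Stirling number of the first kind satisfies
`(C(n,2)^r/r!)·e^{−λ}(1 − e^{λ}(f₁+f₂)) ≤ s(n,k) ≤ (C(n,2)^r/r!)·e^{−λ}(1 + e^{λ}(f₁+f₂))`. -/
theorem stirling_first_kind_bounds (n k : ℕ) (hn : 2 ≤ n) (hk1 : 1 ≤ k) (hkn : k ≤ n)
    (r : ℕ) (hr : r = n - k)
    (lam f₁ f₂ : ℝ)
    (hlam : lam = (4/3) * (r.choose 2 : ℝ) * ((n : ℝ) - 1/2) / ((n : ℝ) * ((n : ℝ) - 1)))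
    (hf₁ : f₁ = (r.choose 2 : ℝ) * (2 * (r : ℝ) - 3) *
      (4 / (3 * (n : ℝ)) * (((n : ℝ) - 1/2) / ((n : ℝ) - 1))) ^ 2)
    (hf₂ : f₂ = (r.choose 2 : ℝ) * (2 * (r : ℝ) - 3) / (n.choose 2 : ℝ)) :
    (n.choose 2 : ℝ) ^ r / (r.factorial : ℝ) * Real.exp (-lam) *
        (1 - Real.exp lam * (f₁ + f₂)) ≤ (stirling1 n k : ℝ) ∧
    (stirling1 n k : ℝ) ≤ (n.choose 2 : ℝ) ^ r / (r.factorial : ℝ) * Real.exp (-lam) *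
        (1 + Real.exp lam * (f₁ + f₂)) :=
  stirling_first_kind_bounds_general n k hn hkn r hr lam f₁ f₂ hlam hf₁ hf₂
end

section
/- Let n ≥ 2 and 1 ≤ k ≤ n, set r = n − k, and define p := (4/(3n))·((n − 1/2)/(n − 1)), m := 2r − 2, and g_1 := (1/2)·(1 − p − √(1 − (4m − 2)p + p²)), assuming 1 − (4m − 2)p + p² ≥ 0. If p·e^{g_1} ∈ (0,1), then the unsigned Stirling number of the first kind satisfies s(n,k) ≥ (binomial(n,2)^r / r!) · (1 − p·e^{g_1})^{binomial(r,2)}. -/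
open Finset Filter

/-!
Upper bound. Place `r` rooks on `B_n` in pairwise distinct columns and list them by increasing
column `j₁ < ⋯ < j_r`. The product of the transpositions `(i_s j_s)` has exactly `n - r` cycles,
since each new factor merges the fixed point `j_s` into the cycle of `i_s`, and the placement
can be read back from the product (its largest moved point is `j_r`, sent there from `i_r`).
Hence the number of column-injective placements is at most `r! · s(n, n - r)`.

Lower bound. For a uniformly random placement, the event that rooks `a` and `b` share a column
has probability `p = ∑ j² / C(n,2)²`, even conditionally on any event concerning the other
rooks, and it shares rooks with at most `2r - 3` such events (itself included). The local lemma
therefore leaves a proportion `(1 - x)^C(r,2)` of placements column-injective as soon as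
`p ≤ x (1 - x)^(2r - 3)`. For `x = p e^{g₁}` this follows from
`g₁ (1 - p - g₁) = (2r - 3) p`, using `(1 - g) e^g ≤ 1` and `1 - x ≥ e^{-x/(1-x)}`.
-/

namespace Equiv.Perm

variable {α : Type*} [DecidableEq α]

theorem IsCycle.mul_swap [Finite α] {c : Perm α} (hc : c.IsCycle) {i j : α} (hi : c i ≠ i)
    (hj : c j = j) : (c * swap i j).IsCycle := by
  set τ := c * swap i j
  have hij : i ≠ j := by rintro rfl; exact hi hj
  have hτi : τ i = j := by simp [τ, hj]
  have hτ_apply : ∀ u, τ.SameCycle u (c u) := by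
    intro u
    by_cases hu : u = i
    · subst hu
      exact ⟨2, by simp [τ, pow_two, hj]⟩
    by_cases hu' : u = j
    · subst hu'; rw [hj]
    · have : τ u = c u := by simp [τ, swap_apply_of_ne_of_ne hu hu']
      rw [← this]; exact (SameCycle.refl τ u).apply_right
  have hτ_pow : ∀ k : ℕ, τ.SameCycle i ((c ^ k) i) := by
    intro k
    induction k with
    | zero => rfl
    | succ k ih => rw [pow_succ', mul_apply]; exact ih.trans (hτ_apply _)
  refine ⟨i, by rw [hτi]; exact hij.symm, fun y hy => ?_⟩
  by_cases hyj : y = j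
  · rw [hyj, ← hτi]; exact (SameCycle.refl τ i).apply_right
  have hcy : c y ≠ y := by
    by_cases hyi : y = i
    · exact hyi ▸ hi
    · simpa [τ, swap_apply_of_ne_of_ne hyi hyj] using hy
  obtain ⟨k, rfl⟩ := (hc.sameCycle hi hcy).exists_nat_pow_eq
  exact hτ_pow k

variable [Fintype α]

theorem card_cycleType_mul_swap_of_apply_eq_self {σ : Perm α} {i j : α} (hij : i ≠ j)
    (hi : σ i = i) (hj : σ j = j) :
    (σ * swap i j).cycleType.card = σ.cycleType.card + 1 := by
  have hdisj : σ.Disjoint (swap i j) := fun x => by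
    by_cases hx : x = i ∨ x = j
    · rcases hx with rfl | rfl <;> simp_all
    · push Not at hx; exact .inr (swap_apply_of_ne_of_ne hx.1 hx.2)
  rw [hdisj.cycleType_mul, Multiset.card_add, card_cycleType_eq_one.mpr (isCycle_swap hij)]

theorem card_cycleType_mul_swap_of_apply_ne_self {σ : Perm α} {i j : α} (hi : σ i ≠ i)
    (hj : σ j = j) : (σ * swap i j).cycleType.card = σ.cycleType.card := by
  set c := σ.cycleOf i
  set ρ := σ * c⁻¹
  have hc : c ∈ σ.cycleFactorsFinset :=
    cycleOf_mem_cycleFactorsFinset_iff.mpr (mem_support.mpr hi)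
  have hρc : ρ.Disjoint c := disjoint_mul_inv_of_mem_cycleFactorsFinset hc
  have hcj : c j = j := by rw [cycleOf_apply]; split_ifs <;> simp [hj]
  have hρj : ρ j = j := by rw [mul_apply, inv_eq_iff_eq.mpr hcj.symm, hj]
  have hρc' : ρ.Disjoint (c * swap i j) := fun x => by
    by_cases hxj : x = j
    · exact .inl (hxj ▸ hρj)
    refine (hρc x).imp_right fun hcx => ?_
    have hxi : x ≠ i := by rintro rfl; exact hi (by simpa [c] using hcx)
    rw [mul_apply, swap_apply_of_ne_of_ne hxi hxj, hcx]
  have hσ : σ = ρ * c := by simp [ρ]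
  rw [hσ, mul_assoc, hρc'.cycleType_mul, hρc.cycleType_mul, Multiset.card_add, Multiset.card_add,
    card_cycleType_eq_one.mpr (isCycle_cycleOf σ hi),
    card_cycleType_eq_one.mpr ((isCycle_cycleOf σ hi).mul_swap (by simpa [c] using hi) hcj)]

theorem filter_mul_swap_apply_eq_self (σ : Perm α) {i j : α} (hij : i ≠ j) (hj : σ j = j) :
    univ.filter (fun x => (σ * swap i j) x = x) = univ.filter (fun x => σ x = x) \ {i, j} := by
  ext x
  simp only [Finset.mem_filter, Finset.mem_univ, true_and, Finset.mem_sdiff, Finset.mem_insert,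
    Finset.mem_singleton]
  by_cases hxi : x = i
  · subst hxi; simp [hj, hij.symm]
  by_cases hxj : x = j
  · subst hxj
    simp [show σ i ≠ x from fun h => hij (σ.injective (h.trans hj.symm))]
  · simp [swap_apply_of_ne_of_ne hxi hxj, hxi, hxj]

end Equiv.Perm

open Equiv Equiv.Perm

theorem numCycles_mul_swap {n : ℕ} (σ : Perm (Fin n)) {i j : Fin n} (hij : i ≠ j)
    (hj : σ j = j) : numCycles (σ * swap i j) + 1 = numCycles σ := by
  have hfix := congrArg Finset.card (σ.filter_mul_swap_apply_eq_self hij hj)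
  have hj' : j ∈ univ.filter fun x => σ x = x := by simp [hj]
  have hj_erase := card_erase_add_one hj'
  rw [sdiff_insert, sdiff_singleton_eq_erase] at hfix
  unfold numCycles
  by_cases hi : σ i = i
  · have hi_erase := card_erase_add_one (s := (univ.filter fun x => σ x = x).erase j) (a := i)
      (by simp [hi, hij])
    rw [card_cycleType_mul_swap_of_apply_eq_self hij hi hj]
    omega
  · rw [erase_eq_of_notMem (by simp [hi])] at hfix
    rw [card_cycleType_mul_swap_of_apply_ne_self hi hj]
    omega

theorem card_filter_injective_comp_le {α β : Type*} [Fintype α] [DecidableEq α] [LinearOrder β]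
    (g : α → β) (r : ℕ) :
    #{f : Fin r → α | Function.Injective (g ∘ f)} ≤
      r.factorial * #{f : Fin r → α | StrictMono (g ∘ f)} :=
  calc _ ≤ #(univ ×ˢ univ.filter fun f : Fin r → α => StrictMono (g ∘ f)) := by
        refine card_le_card_of_injOn (fun f => (Tuple.sort (g ∘ f), f ∘ Tuple.sort (g ∘ f)))
          (fun f hf => ?_) (fun f _ f' _ h => ?_)
        · simp only [coe_filter, coe_product, coe_univ, Set.mem_prod, Set.mem_univ, true_and,
            mem_univ, Set.mem_ofPred_eq] at hf ⊢
          exact (Tuple.monotone_sort _).strictMono_of_injective (hf.comp (Tuple.sort _).injective)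
        · obtain ⟨hσ, hf⟩ := Prod.mk.inj h
          funext x
          simpa [hσ] using congrFun hf ((Tuple.sort (g ∘ f')).symm x)
    _ = r.factorial * #{f : Fin r → α | StrictMono (g ∘ f)} := by
        rw [card_product, card_univ, Fintype.card_perm, Fintype.card_fin]

/-- The board `B_n = {(i, j) : i < j}`, with `0`-based indices: column `j` has `j` squares. -/
abbrev Board (n : ℕ) := {q : Fin n × Fin n // q.1 < q.2}

namespace Board

variable {n r : ℕ}

def row (q : Board n) : Fin n := q.1.1

def col (q : Board n) : Fin n := q.1.2

theorem row_lt_col (q : Board n) : q.row < q.col := q.2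

theorem card_eq_choose_two : Fintype.card (Board n) = n.choose 2 := by
  rw [Fintype.card_subtype, Fintype.card_product_filter_lt, Fintype.card_fin]

theorem card_filter_col_eq (j : Fin n) : #{q : Board n | q.col = j} = j := by
  rw [← Fin.card_Iio j]
  refine card_bij (fun q _ => q.row) (fun q hq => ?_) (fun q hq q' hq' h => ?_) (fun i hi => ?_)
  · simpa [(mem_filter.mp hq).2] using q.row_lt_col
  · exact Subtype.ext (Prod.ext h ((mem_filter.mp hq).2.trans (mem_filter.mp hq').2.symm))
  · exact ⟨⟨(i, j), mem_Iio.mp hi⟩, mem_filter.mpr ⟨mem_univ _, rfl⟩, rfl⟩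

def prodSwaps (f : Fin r → Board n) : Perm (Fin n) :=
  (List.ofFn fun s => swap (f s).row (f s).col).prod

theorem prodSwaps_succ (f : Fin (r + 1) → Board n) :
    prodSwaps f = prodSwaps (Fin.init f) * swap (f (Fin.last r)).row (f (Fin.last r)).col := by
  rw [prodSwaps, List.ofFn_succ', List.concat_eq_append, List.prod_append]
  simp [prodSwaps, Fin.init]

theorem prodSwaps_apply_of_forall_col_lt (f : Fin r → Board n) {x : Fin n}
    (hx : ∀ s, (f s).col < x) : prodSwaps f x = x := by
  induction r with
  | zero => rfl
  | succ r ih =>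
    have hc := hx (Fin.last r)
    rw [prodSwaps_succ, Perm.mul_apply,
      swap_apply_of_ne_of_ne ((row_lt_col _).trans hc).ne' hc.ne', ih (Fin.init f) fun s => hx _]

theorem prodSwaps_init_apply_col_last {f : Fin (r + 1) → Board n} (hf : StrictMono (col ∘ f)) :
    prodSwaps (Fin.init f) (f (Fin.last r)).col = (f (Fin.last r)).col :=
  prodSwaps_apply_of_forall_col_lt _ fun s => hf (Fin.castSucc_lt_last s)

theorem numCycles_prodSwaps {f : Fin r → Board n} (hf : StrictMono (col ∘ f)) :
    numCycles (prodSwaps f) + r = n := by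
  induction r with
  | zero => simp [numCycles, prodSwaps]
  | succ r ih =>
    have := numCycles_mul_swap (prodSwaps (Fin.init f)) (row_lt_col (f (Fin.last r))).ne
      (prodSwaps_init_apply_col_last hf)
    have := ih (f := Fin.init f) (hf.comp Fin.strictMono_castSucc)
    rw [prodSwaps_succ]
    omega

theorem prodSwaps_apply_row_last {f : Fin (r + 1) → Board n} (hf : StrictMono (col ∘ f)) :
    prodSwaps f (f (Fin.last r)).row = (f (Fin.last r)).col := by
  rw [prodSwaps_succ, Perm.mul_apply, swap_apply_left, prodSwaps_init_apply_col_last hf]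

theorem isGreatest_moved_prodSwaps {f : Fin (r + 1) → Board n} (hf : StrictMono (col ∘ f)) :
    IsGreatest {x | prodSwaps f x ≠ x} (f (Fin.last r)).col := by
  refine ⟨fun h => (row_lt_col (f (Fin.last r))).ne ?_, fun x hx => not_lt.mp fun hlt => hx ?_⟩
  · rw [prodSwaps_succ, Perm.mul_apply, swap_apply_right] at h
    exact (prodSwaps (Fin.init f)).injective (h.trans (prodSwaps_init_apply_col_last hf).symm)
  · exact prodSwaps_apply_of_forall_col_lt f fun s => (hf.monotone (Fin.le_last s)).trans_lt hlt

theorem prodSwaps_injOn : Set.InjOn (prodSwaps (n := n) (r := r)) {f | StrictMono (col ∘ f)} := by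
  induction r with
  | zero => exact fun f _ g _ _ => funext fun s => s.elim0
  | succ r ih =>
    intro f hf g hg h
    have hcol : (f (Fin.last r)).col = (g (Fin.last r)).col :=
      (isGreatest_moved_prodSwaps hf).unique (h ▸ isGreatest_moved_prodSwaps hg)
    have hrow : (f (Fin.last r)).row = (g (Fin.last r)).row := (prodSwaps f).injective <| by
      rw [prodSwaps_apply_row_last hf, h, prodSwaps_apply_row_last hg, hcol]
    have hlast : f (Fin.last r) = g (Fin.last r) := Subtype.ext (Prod.ext hrow hcol)
    have hinit : Fin.init f = Fin.init g := by
      refine ih (hf.comp Fin.strictMono_castSucc) (hg.comp Fin.strictMono_castSucc) ?_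
      rw [prodSwaps_succ, prodSwaps_succ, hlast] at h
      exact mul_right_cancel h
    rw [← Fin.snoc_init_self f, ← Fin.snoc_init_self g, hinit, hlast]

theorem card_strictMono_col_le_stirling1 :
    #{f : Fin r → Board n | StrictMono (col ∘ f)} ≤ stirling1 n (n - r) := by
  rw [stirling1, Nat.card_eq_fintype_card, Fintype.card_subtype]
  refine card_le_card_of_injOn prodSwaps (fun f hf => ?_) (by simpa using prodSwaps_injOn)
  have := numCycles_prodSwaps (mem_filter.mp hf).2
  simp only [coe_filter, mem_univ, true_and, Set.mem_ofPred_eq]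
  omega

theorem card_col_injective_le :
    #({f | Function.Injective (col ∘ f)} : Finset (Fin r → Board n)) ≤
      r.factorial * stirling1 n (n - r) :=
  (card_filter_injective_comp_le col r).trans
    (Nat.mul_le_mul_left _ card_strictMono_col_le_stirling1)

end Board

section LocalLemma

variable {Ω β : Type*} [Fintype Ω] [DecidableEq Ω]

def avoiding (A : β → Finset Ω) (S : Finset β) : Finset Ω := {ω | ∀ b ∈ S, ω ∉ A b}

variable {A : β → Finset Ω} {x : ℝ}

@[simp] theorem avoiding_empty : avoiding A ∅ = univ := by simp [avoiding]

theorem avoiding_insert [DecidableEq β] (b : β) (S : Finset β) :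
    avoiding A (insert b S) = avoiding A S \ A b := by
  ext ω; simp [avoiding, and_comm]

theorem avoiding_anti {S T : Finset β} (h : S ⊆ T) : avoiding A T ⊆ avoiding A S :=
  fun _ hω => mem_filter.mpr ⟨mem_univ _, fun b hb => (mem_filter.mp hω).2 b (h hb)⟩

theorem one_sub_mul_card_avoiding_le [DecidableEq β] {b : β} {S : Finset β}
    (hb : (#(avoiding A S ∩ A b) : ℝ) ≤ x * #(avoiding A S)) :
    (1 - x) * #(avoiding A S) ≤ #(avoiding A (insert b S)) := by
  have := card_sdiff_add_card_inter (avoiding A S) (A b)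
  rw [← Nat.cast_inj (R := ℝ), Nat.cast_add] at this
  rw [avoiding_insert]
  linarith

theorem pow_mul_card_avoiding_le [DecidableEq β] (hx : x ≤ 1) (U T : Finset β)
    (h : ∀ T' ⊆ T, ∀ b ∈ T, b ∉ T' →
      (#(avoiding A (U ∪ T') ∩ A b) : ℝ) ≤ x * #(avoiding A (U ∪ T'))) :
    (1 - x) ^ #T * #(avoiding A U) ≤ #(avoiding A (U ∪ T)) := by
  induction T using Finset.induction_on with
  | empty => simp
  | insert b T hbT ih =>
    have ih := ih fun T' hT' c hc => h T' (hT'.trans (subset_insert _ _)) c (mem_insert_of_mem hc)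
    rw [card_insert_of_notMem hbT, pow_succ', mul_assoc, union_insert]
    exact (mul_le_mul_of_nonneg_left ih (by linarith)).trans
      (one_sub_mul_card_avoiding_le (h T (subset_insert _ _) b (mem_insert_self _ _) hbT))

variable {E : Finset β} {Γ : β → Finset β} {p : ℝ} {d : ℕ}

/-- The Lovász local lemma in counting form: `Γ b` is the dependency neighbourhood of `A b`, and
`hind` says that `A b` has conditional probability at most `p` given that any family of events
outside `Γ b` is avoided. -/
theorem card_avoiding_inter_le [DecidableEq β] (hx0 : 0 ≤ x) (hx1 : x ≤ 1)
    (hpx : p ≤ x * (1 - x) ^ d)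
    (hind : ∀ b ∈ E, ∀ S ⊆ E, Disjoint S (Γ b) →
      (#(avoiding A S ∩ A b) : ℝ) ≤ p * #(avoiding A S))
    (hΓ : ∀ b ∈ E, #(Γ b) ≤ d) {S : Finset β} (hS : S ⊆ E) {b : β} (hb : b ∈ E) :
    (#(avoiding A S ∩ A b) : ℝ) ≤ x * #(avoiding A S) := by
  induction S using Finset.strongInduction generalizing b with
  | H S ih =>
  set S₁ := S.filter (· ∈ Γ b)
  set S₂ := S.filter (· ∉ Γ b)
  have hS₂ : S₂ ∪ S₁ = S := by rw [union_comm]; exact filter_union_filter_not_eq _ _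
  have hpeel : (1 - x) ^ #S₁ * #(avoiding A S₂) ≤ #(avoiding A S) := by
    refine hS₂ ▸ pow_mul_card_avoiding_le hx1 S₂ S₁ fun T' hT' c hc hcT' => ?_
    have hsub : S₂ ∪ T' ⊆ S :=
      union_subset (filter_subset _ _) (hT'.trans (filter_subset _ _))
    have hcS : c ∈ S := filter_subset _ _ hc
    have hc' : c ∉ S₂ ∪ T' := by
      simp only [mem_union, not_or, S₂, mem_filter, not_and, not_not]
      exact ⟨fun _ => (mem_filter.mp hc).2, hcT'⟩
    exact ih _ ((ssubset_iff_of_subset hsub).mpr ⟨c, hcS, hc'⟩) (hsub.trans hS) (hS hcS)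
  have hfar : (#(avoiding A S ∩ A b) : ℝ) ≤ p * #(avoiding A S₂) :=
    le_trans (by gcongr; exact avoiding_anti (filter_subset _ _))
      (hind b hb S₂ ((filter_subset _ _).trans hS)
        (disjoint_left.mpr fun _ hc => (mem_filter.mp hc).2))
  have hS₁ : #S₁ ≤ d := (card_le_card fun c hc => (mem_filter.mp hc).2).trans (hΓ b hb)
  calc (#(avoiding A S ∩ A b) : ℝ) ≤ p * #(avoiding A S₂) := hfar
    _ ≤ x * (1 - x) ^ #S₁ * #(avoiding A S₂) := by
        gcongr
        exact hpx.trans <| mul_le_mul_of_nonneg_left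
          (pow_le_pow_of_le_one (by linarith) (by linarith) hS₁) hx0
    _ ≤ x * #(avoiding A S) := by rw [mul_assoc]; gcongr

theorem card_avoiding_ge [DecidableEq β] (hx0 : 0 ≤ x) (hx1 : x ≤ 1)
    (hpx : p ≤ x * (1 - x) ^ d)
    (hind : ∀ b ∈ E, ∀ S ⊆ E, Disjoint S (Γ b) →
      (#(avoiding A S ∩ A b) : ℝ) ≤ p * #(avoiding A S))
    (hΓ : ∀ b ∈ E, #(Γ b) ≤ d) :
    (1 - x) ^ #E * Fintype.card Ω ≤ #(avoiding A E) := by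
  simpa using pow_mul_card_avoiding_le hx1 ∅ E fun T' hT' b hb _ =>
    card_avoiding_inter_le hx0 hx1 hpx hind hΓ (by simpa using hT') hb

end LocalLemma

section Independence

variable {ι α : Type*} [DecidableEq ι] [DecidableEq α]

open Function in
theorem card_filter_pair_mem_mul_card_sq [Fintype α] {a b : ι} (hab : a ≠ b)
    {G : Finset (ι → α)} (hG : DependsOn (· ∈ G) ({a, b}ᶜ : Set ι))
    (D : Finset (α × α)) :
    #{f ∈ G | (f a, f b) ∈ D} * Fintype.card α ^ 2 = #D * #G := by
  set fiber : α × α → Finset (ι → α) := fun u => {f ∈ G | (f a, f b) = u}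
  set reset : α × α → (ι → α) → (ι → α) := fun v f => update (update f a v.1) b v.2
  have hreset : ∀ v f, ∀ i ∈ ({a, b}ᶜ : Set ι), reset v f i = f i := fun v f i hi => by
    simp only [Set.mem_compl_iff, Set.mem_insert_iff, Set.mem_singleton_iff, not_or] at hi
    simp [reset, hi.1, hi.2]
  have hmaps : ∀ u v, ∀ f ∈ fiber u, reset v f ∈ fiber v := fun u v f hf => by
    refine mem_filter.mpr ⟨?_, by simp [reset, hab]⟩
    exact (eq_iff_iff.mp (hG fun i hi => (hreset v f i hi).symm)).mp (mem_filter.mp hf).1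
  have hinj : ∀ u v, Set.InjOn (reset v) (fiber u) := fun u v f hf g hg h => by
    obtain ⟨ha, hb⟩ := Prod.mk.inj ((mem_filter.mp hf).2.trans (mem_filter.mp hg).2.symm)
    funext i
    by_cases hi : i ∈ ({a, b}ᶜ : Set ι)
    · rw [← hreset v f i hi, h, hreset v g i hi]
    · simp only [Set.mem_compl_iff, Set.mem_insert_iff, Set.mem_singleton_iff, not_not] at hi
      rcases hi with rfl | rfl
      exacts [ha, hb]
  have hcard : ∀ u v, #(fiber u) = #(fiber v) := fun u v =>
    (card_le_card_of_injOn _ (hmaps u v) (hinj u v)).antisymm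
      (card_le_card_of_injOn _ (hmaps v u) (hinj v u))
  have hfiber : ∀ u, #(fiber u) * Fintype.card α ^ 2 = #G := fun u => by
    rw [card_eq_sum_card_fiberwise (s := G) (f := fun f => (f a, f b)) (t := univ)
      fun _ _ => mem_univ _,
      sum_congr rfl fun v _ => hcard v u, sum_const, card_univ, Fintype.card_prod, smul_eq_mul]
    ring
  rw [card_eq_sum_card_fiberwise (s := G.filter fun f => (f a, f b) ∈ D)
    (f := fun f => (f a, f b)) (t := D) fun f hf => (mem_filter.mp hf).2, sum_mul,
    ← smul_eq_mul, ← sum_const]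
  refine sum_congr rfl fun u hu => ?_
  rw [filter_filter, filter_congr fun f _ => and_iff_right_of_imp fun h => h ▸ hu, hfiber u]

theorem dependsOn_mem_avoiding {β : Type*} [Fintype ι] [Fintype α]
    {A : β → Finset (ι → α)} {S : Finset β} {s : Set ι}
    (h : ∀ b ∈ S, DependsOn (· ∈ A b) s) :
    DependsOn (· ∈ avoiding A S) s := fun f g hfg => by
  simp only [avoiding, mem_filter, mem_univ, true_and, eq_iff_iff]
  exact forall₂_congr fun b hb => not_congr (eq_iff_iff.mp (h b hb hfg))

end Independence

theorem sum_range_sq_mul_six (n : ℕ) :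
    (∑ i ∈ range n, (i : ℝ) ^ 2) * 6 = n * (n - 1) * (2 * n - 1) := by
  induction n with
  | zero => simp
  | succ n ih => rw [sum_range_succ, add_mul, ih]; push_cast; ring

namespace Board

variable {n r : ℕ}

open SimpleGraph Function

def sameColumnPairs (n : ℕ) : Finset (Board n × Board n) := {u | u.1.col = u.2.col}

theorem card_sameColumnPairs : #(sameColumnPairs n) = ∑ j : Fin n, (j : ℕ) ^ 2 := by
  rw [card_eq_sum_card_fiberwise (f := fun u => u.1.col) (t := univ) fun _ _ => mem_univ _]
  refine sum_congr rfl fun j _ => ?_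
  have : {u ∈ sameColumnPairs n | u.1.col = j} =
      ((univ.filter fun q : Board n => q.col = j) ×ˢ (univ.filter fun q : Board n => q.col = j) :
        Finset (Board n × Board n)) := by
    ext u
    simp only [sameColumnPairs, Finset.mem_filter, Finset.mem_univ, true_and, Finset.mem_product]
    constructor
    · rintro ⟨h, rfl⟩; exact ⟨rfl, h.symm⟩
    · rintro ⟨h₁, h₂⟩; exact ⟨h₁.trans h₂.symm, h₁⟩
  rw [this, card_product, card_filter_col_eq, sq]

theorem cast_card_sameColumnPairs :
    (#(sameColumnPairs n) : ℝ) =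
      4 / (3 * (n : ℝ)) * (((n : ℝ) - 1/2) / ((n : ℝ) - 1)) * (n.choose 2 : ℝ) ^ 2 := by
  have hsum := sum_range_sq_mul_six n
  rw [← Fin.sum_univ_eq_sum_range (fun i => (i : ℝ) ^ 2)] at hsum
  rw [card_sameColumnPairs, Nat.cast_choose_two]
  push_cast
  field_simp
  linear_combination 4 * hsum

def sameColumn (n : ℕ) (e : Sym2 (Fin r)) : Finset (Fin r → Board n) :=
  {f | (e.map fun s => (f s).col).IsDiag}

@[simp] theorem mem_sameColumn_mk {f : Fin r → Board n} {a b : Fin r} :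
    f ∈ sameColumn n s(a, b) ↔ (f a).col = (f b).col := by
  simp [sameColumn]

theorem dependsOn_mem_sameColumn (e : Sym2 (Fin r)) :
    DependsOn (· ∈ sameColumn n e) {s | s ∈ e} := by
  induction e using Sym2.ind with
  | h a b => intro f g h; simp [h a (Sym2.mem_mk_left a b), h b (Sym2.mem_mk_right a b)]

def touchingEdges (e : Sym2 (Fin r)) : Finset (Sym2 (Fin r)) :=
  e.lift ⟨fun a b => incidenceFinset ⊤ a ∪ incidenceFinset ⊤ b, fun _ _ => union_comm _ _⟩

theorem card_touchingEdges_le {a b : Fin r} (hab : a ≠ b) :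
    #(touchingEdges s(a, b)) ≤ 2 * r - 3 := by
  have hunion := card_union_add_card_inter (incidenceFinset ⊤ a) (incidenceFinset ⊤ b)
  have hinter : 0 < #(incidenceFinset ⊤ a ∩ incidenceFinset ⊤ b) :=
    card_pos.mpr ⟨s(a, b), by simp [incidenceSet, hab]⟩
  simp only [card_incidenceFinset_eq_degree, complete_graph_degree, Fintype.card_fin] at hunion
  simp only [touchingEdges, Sym2.lift_mk]
  omega

theorem avoiding_sameColumn_edgeFinset_top :
    avoiding (sameColumn n) (⊤ : SimpleGraph (Fin r)).edgeFinset =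
      ({f | Injective (col ∘ f)} : Finset (Fin r → Board n)) := by
  ext f
  simp only [avoiding, mem_filter, mem_univ, true_and]
  refine ⟨fun h a b hab => by_contra fun hne =>
    h s(a, b) (by simpa using hne) (by simpa using hab), fun h e he hfe => ?_⟩
  induction e using Sym2.ind with
  | h a b =>
    rw [mem_edgeFinset, mem_edgeSet, top_adj] at he
    exact he (h (mem_sameColumn_mk.mp hfe))

theorem card_avoiding_inter_sameColumn {S : Finset (Sym2 (Fin r))} {a b : Fin r} (hab : a ≠ b)
    (hS : S ⊆ (⊤ : SimpleGraph (Fin r)).edgeFinset)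
    (hdisj : Disjoint S (touchingEdges s(a, b))) :
    #(avoiding (sameColumn n) S ∩ sameColumn n s(a, b)) * n.choose 2 ^ 2 =
      #(sameColumnPairs n) * #(avoiding (sameColumn n) S) := by
  have hdep : DependsOn (· ∈ avoiding (sameColumn n) S) ({a, b}ᶜ : Set (Fin r)) := by
    refine dependsOn_mem_avoiding fun e he => (dependsOn_mem_sameColumn e).mono fun v hv => ?_
    have hE : e ∈ (⊤ : SimpleGraph (Fin r)).edgeSet := mem_edgeFinset.mp (hS he)
    have hnot := disjoint_left.mp hdisj he
    simp only [touchingEdges, Sym2.lift_mk, mem_union, mem_incidenceFinset, not_or] at hnot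
    simp only [Set.mem_compl_iff, Set.mem_insert_iff, Set.mem_singleton_iff, not_or]
    constructor <;> rintro rfl
    exacts [hnot.1 ⟨hE, hv⟩, hnot.2 ⟨hE, hv⟩]
  rw [← card_eq_choose_two, ← card_filter_pair_mem_mul_card_sq hab hdep]
  congr 2
  ext f
  simp [sameColumnPairs]

theorem pow_mul_le_card_col_injective (hn : 2 ≤ n) {p x : ℝ}
    (hp : (#(sameColumnPairs n) : ℝ) ≤ p * n.choose 2 ^ 2) (hx0 : 0 ≤ x) (hx1 : x ≤ 1)
    (hpx : p ≤ x * (1 - x) ^ (2 * r - 3)) :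
    (1 - x) ^ r.choose 2 * (n.choose 2 : ℝ) ^ r ≤
      #({f | Injective (col ∘ f)} : Finset (Fin r → Board n)) := by
  have hC : (0 : ℝ) < n.choose 2 ^ 2 := by have := Nat.choose_pos hn; positivity
  have hLLL := card_avoiding_ge (Γ := touchingEdges) hx0 hx1 hpx
    (A := sameColumn n) (E := (⊤ : SimpleGraph (Fin r)).edgeFinset) ?_ ?_
  · rwa [card_edgeFinset_top_eq_card_choose_two, Fintype.card_fin, Fintype.card_fun,
      card_eq_choose_two, Fintype.card_fin, avoiding_sameColumn_edgeFinset_top,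
      Nat.cast_pow] at hLLL
  · intro e he S hS hdisj
    induction e using Sym2.ind with
    | h a b =>
      have hab : a ≠ b := by simpa using he
      have h := congrArg (Nat.cast (R := ℝ))
        (card_avoiding_inter_sameColumn (n := n) hab hS hdisj)
      push_cast at h
      refine le_of_mul_le_mul_right ?_ hC
      rw [h, mul_right_comm]
      gcongr
  · intro e he
    induction e using Sym2.ind with
    | h a b => exact card_touchingEdges_le (by simpa using he)

theorem card_col_injective_of_lt_two (hr : r < 2) :
    #({f | Injective (col ∘ f)} : Finset (Fin r → Board n)) = n.choose 2 ^ r := by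
  have : Subsingleton (Fin r) := Fin.subsingleton_iff_le_one.mpr (by omega)
  rw [filter_true_of_mem fun f _ => injective_of_subsingleton _, card_univ, Fintype.card_fun,
    card_eq_choose_two, Fintype.card_fin]

end Board

open Real in
theorem le_mul_one_sub_pow_of_mul_one_sub_sub_eq {p g : ℝ} {d : ℕ} (hp : 0 ≤ p) (hg : 0 ≤ g)
    (hid : g * (1 - p - g) = d * p) (hx : p * exp g < 1) :
    p ≤ p * exp g * (1 - p * exp g) ^ d := by
  set x := p * exp g
  have hx0 : 0 ≤ x := by positivity
  have h1x : 0 < 1 - x := by linarith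
  have hexp : (1 - g) * exp g ≤ 1 := by
    have := add_one_le_exp (-g)
    calc (1 - g) * exp g ≤ exp (-g) * exp g := by gcongr; linarith
      _ = 1 := by rw [← exp_add, neg_add_cancel, exp_zero]
  have hdx : d * x ≤ g * (1 - x) := by
    have : (d : ℝ) * x = g * ((1 - g) * exp g - x) := by
      simp only [x]; linear_combination (exp g) * hid.symm
    rw [this]
    exact mul_le_mul_of_nonneg_left (by linarith) hg
  have hexp_le : exp (-(x / (1 - x))) ≤ 1 - x := by
    rw [exp_neg, inv_le_comm₀ (exp_pos _) h1x]
    calc (1 - x)⁻¹ = x / (1 - x) + 1 := by field_simp; ring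
      _ ≤ exp (x / (1 - x)) := add_one_le_exp _
  calc p = x * exp (-g) := by
        simp only [x, mul_assoc, ← exp_add, add_neg_cancel, exp_zero, mul_one]
    _ ≤ x * exp (-(x / (1 - x))) ^ d := by
        rw [← exp_nat_mul]
        gcongr
        rw [mul_neg, neg_le_neg_iff, ← mul_div_assoc, div_le_iff₀ h1x]
        exact hdx
    _ ≤ x * (1 - x) ^ d := by gcongr

theorem mul_one_sub_sub_eq_of_eq_sqrt {p m g : ℝ} (hdisc : 0 ≤ 1 - (4 * m - 2) * p + p ^ 2)
    (hg : g = 1 / 2 * (1 - p - √(1 - (4 * m - 2) * p + p ^ 2))) :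
    g * (1 - p - g) = (m - 1) * p := by
  have h := Real.sq_sqrt hdisc
  rw [show √(1 - (4 * m - 2) * p + p ^ 2) = 1 - p - 2 * g by rw [hg]; ring] at h
  linear_combination -h / 4

theorem nonneg_of_eq_sqrt {p m g : ℝ} (hp : p ≤ 1) (hmp : 0 ≤ (m - 1) * p)
    (hg : g = 1 / 2 * (1 - p - √(1 - (4 * m - 2) * p + p ^ 2))) : 0 ≤ g := by
  have : √(1 - (4 * m - 2) * p + p ^ 2) ≤ 1 - p :=
    Real.sqrt_le_iff.mpr ⟨by linarith, by nlinarith⟩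
  rw [hg]
  linarith

theorem four_div_three_mul_mul_lt_one {n : ℝ} (hn : 3 ≤ n) :
    4 / (3 * n) * ((n - 1 / 2) / (n - 1)) < 1 := by
  rw [div_mul_div_comm, div_lt_one (by nlinarith)]
  nlinarith

open Real Board in
theorem stirling_first_kind_LLL_lower_bound_general (n k : ℕ) (hk1 : 1 ≤ k) (hkn : k ≤ n)
    (r : ℕ) (hr : r = n - k)
    (p m g₁ : ℝ)
    (hp : p = 4 / (3 * (n : ℝ)) * (((n : ℝ) - 1/2) / ((n : ℝ) - 1)))
    (hm : m = 2 * (r : ℝ) - 2)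
    (hdisc : 0 ≤ 1 - (4 * m - 2) * p + p ^ 2)
    (hg₁ : g₁ = (1/2) * (1 - p - Real.sqrt (1 - (4 * m - 2) * p + p ^ 2)))
    (hlt : p * Real.exp g₁ < 1) :
    (n.choose 2 : ℝ) ^ r / (r.factorial : ℝ) * (1 - p * Real.exp g₁) ^ (r.choose 2)
      ≤ (stirling1 n k : ℝ) := by
  obtain rfl : k = n - r := by omega
  have hlower : (1 - p * exp g₁) ^ r.choose 2 * (n.choose 2 : ℝ) ^ r ≤
      #({f | Function.Injective (col ∘ f)} : Finset (Fin r → Board n)) := by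
    rcases lt_or_ge r 2 with hr2 | hr2
    · rw [Nat.choose_eq_zero_of_lt hr2, pow_zero, one_mul, card_col_injective_of_lt_two hr2,
        Nat.cast_pow]
    have hn : (3 : ℝ) ≤ n := by exact_mod_cast (by omega : 3 ≤ n)
    have hp0 : 0 ≤ p := hp ▸ mul_nonneg (by positivity) (div_nonneg (by linarith) (by linarith))
    have hd : ((2 * r - 3 : ℕ) : ℝ) = m - 1 := by
      rw [hm, Nat.cast_sub (by omega)]; push_cast; ring
    have hg0 : 0 ≤ g₁ := nonneg_of_eq_sqrt (hp ▸ (four_div_three_mul_mul_lt_one hn).le)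
      (hd ▸ by positivity) hg₁
    refine pow_mul_le_card_col_injective (by omega)
      (by rw [cast_card_sameColumnPairs, hp]) (by positivity) hlt.le
      (le_mul_one_sub_pow_of_mul_one_sub_sub_eq hp0 hg0 ?_ hlt)
    rw [hd, mul_one_sub_sub_eq_of_eq_sqrt hdisc hg₁]
  rw [div_mul_eq_mul_div, div_le_iff₀ (by positivity), mul_comm]
  calc _ ≤ (#({f | Function.Injective (col ∘ f)} : Finset (Fin r → Board n)) : ℝ) := hlower
    _ ≤ stirling1 n (n - r) * r.factorial := by
        rw [mul_comm]; exact_mod_cast card_col_injective_le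

/-- Lovász local lemma lower bound: for `n ≥ 2`, `1 ≤ k ≤ n` and `r = n − k`,
with `p = (4/(3n))·((n−1/2)/(n−1))`, `m = 2r − 2` and
`g₁ = (1/2)(1 − p − √(1 − (4m−2)p + p²))`, assuming `1 − (4m−2)p + p² ≥ 0` and
`p·e^{g₁} ∈ (0,1)`, the unsigned Stirling number of the first kind satisfies
`s(n,k) ≥ (C(n,2)^r/r!)·(1 − p·e^{g₁})^{C(r,2)}`. -/
theorem stirling_first_kind_LLL_lower_bound (n k : ℕ) (hn : 2 ≤ n) (hk1 : 1 ≤ k) (hkn : k ≤ n)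
    (r : ℕ) (hr : r = n - k)
    (p m g₁ : ℝ)
    (hp : p = 4 / (3 * (n : ℝ)) * (((n : ℝ) - 1/2) / ((n : ℝ) - 1)))
    (hm : m = 2 * (r : ℝ) - 2)
    (hdisc : 0 ≤ 1 - (4 * m - 2) * p + p ^ 2)
    (hg₁ : g₁ = (1/2) * (1 - p - Real.sqrt (1 - (4 * m - 2) * p + p ^ 2)))
    (hpos : 0 < p * Real.exp g₁) (hlt : p * Real.exp g₁ < 1) :
    (n.choose 2 : ℝ) ^ r / (r.factorial : ℝ) * (1 - p * Real.exp g₁) ^ (r.choose 2)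
      ≤ (stirling1 n k : ℝ) :=
  stirling_first_kind_LLL_lower_bound_general n k hk1 hkn r hr p m g₁ hp hm hdisc hg₁ hlt
end
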